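/- arXiv:2510.10502 — 6 statements merged into one kernel-verified Lean document; each statement's English description precedes it below -/
import Mathlib

section
/- Let U be an n×n upper bidiagonal matrix with diagonal entries ȳ_1,…,ȳ_n and superdiagonal entries y_1,…,y_{n-1}, all nonnegative, and let L be an n×n lower bidiagonal matrix with diagonal entries x̄_1,…,x̄_n and subdiagonal entries x_1,…,x_{n-1}, all nonnegative. Then there exist an n×n lower bidiagonal matrix L' and an n×n upper bidiagonal matrix U', both with all (diagonal, subdiagonal/superdiagonal) entries nonnegative, such that U·L = L'·U'. -/
open Matrix

private lemma sum_one' {n : ℕ} (f : Fin n → ℝ) (i : Fin n)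
    (h0 : ∀ k, k ≠ i → f k = 0) : ∑ k, f k = f i :=
  Finset.sum_eq_single i (fun k _ hk => h0 k hk) (fun h => absurd (Finset.mem_univ i) h)

private lemma sum_two' {n : ℕ} (f : Fin n → ℝ) (i j : Fin n) (hij : i ≠ j)
    (h0 : ∀ k, k ≠ i → k ≠ j → f k = 0) : ∑ k, f k = f i + f j := by
  rw [← Finset.sum_pair hij]
  refine (Finset.sum_subset (Finset.subset_univ _) ?_).symm
  intro k _ hk
  simp only [Finset.mem_insert, Finset.mem_singleton, not_or] at hk
  exact h0 k hk.1 hk.2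

open Matrix Classical

noncomputable section Stmt0Aux

variable (Y y X x : ℕ → ℝ)

def pseq : ℕ → ℝ
  | 0 => Y 0 * X 0 + y 0 * x 0
  | (i+1) => (Y (i+1) * X (i+1) + y (i+1) * x (i+1)) -
      (if pseq i = 0 then 0 else (y i * X (i+1)) * (Y (i+1) * x i) / pseq i)

def lseq (i : ℕ) : ℝ := if pseq Y y X x i = 0 ∧ y i * X (i+1) = 0 then 0 else 1
def useq (i : ℕ) : ℝ :=
  if pseq Y y X x i = 0 then (if y i * X (i+1) = 0 then 1 else 0) else pseq Y y X x i
def vseq (i : ℕ) : ℝ := if pseq Y y X x i = 0 ∧ y i * X (i+1) = 0 then 0 else y i * X (i+1)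
def mseq (i : ℕ) : ℝ :=
  if pseq Y y X x i = 0 then (if y i * X (i+1) = 0 then Y (i+1) * x i else 0)
  else Y (i+1) * x i / pseq Y y X x i

variable (hY : ∀ i, 0 ≤ Y i) (hy : ∀ i, 0 ≤ y i) (hX : ∀ i, 0 ≤ X i) (hx : ∀ i, 0 ≤ x i)

include hY hy hX hx

theorem pseq_inv : ∀ i, y i * x i ≤ pseq Y y X x i := by
  intro i
  induction i with
  | zero =>
    simp only [pseq]
    nlinarith [hY 0, hX 0]
  | succ i ih =>
    simp only [pseq]
    have hyx : 0 ≤ y i * x i := mul_nonneg (hy i) (hx i)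
    split_ifs with h
    · nlinarith [hY (i+1), hX (i+1)]
    · have hp : 0 < pseq Y y X x i := lt_of_le_of_ne (le_trans hyx ih) (Ne.symm h)
      have key : (y i * X (i+1)) * (Y (i+1) * x i) / pseq Y y X x i ≤ Y (i+1) * X (i+1) := by
        rw [div_le_iff₀ hp]
        nlinarith [hY (i+1), hX (i+1), mul_nonneg (hY (i+1)) (hX (i+1))]
      linarith

theorem pseq_nonneg (i : ℕ) : 0 ≤ pseq Y y X x i :=
  le_trans (mul_nonneg (hy i) (hx i)) (pseq_inv Y y X x hY hy hX hx i)

theorem lu_eq (i : ℕ) : lseq Y y X x i * useq Y y X x i = pseq Y y X x i := by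
  simp only [lseq, useq]
  split_ifs with h1 h2 h3 <;> simp_all

theorem lv_eq (i : ℕ) : lseq Y y X x i * vseq Y y X x i = y i * X (i+1) := by
  simp only [lseq, vseq]
  split_ifs with h1
  · simp [h1.2]
  · ring

theorem mu_eq (i : ℕ) : mseq Y y X x i * useq Y y X x i = Y (i+1) * x i := by
  simp only [mseq, useq]
  split_ifs with h1 h2
  · simp
  · -- p i = 0, b ≠ 0 : need c = 0
    have hyx : 0 ≤ y i * x i := mul_nonneg (hy i) (hx i)
    have h0 : y i * x i = 0 :=
      le_antisymm (h1 ▸ pseq_inv Y y X x hY hy hX hx i) hyx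
    have hxi : x i = 0 := by
      rcases mul_eq_zero.1 h0 with h | h
      · exact absurd (by rw [h, zero_mul]) h2
      · exact h
    simp [hxi]
  · field_simp

theorem mv_eq (i : ℕ) : mseq Y y X x i * vseq Y y X x i =
    if pseq Y y X x i = 0 then 0 else (y i * X (i+1)) * (Y (i+1) * x i) / pseq Y y X x i := by
  simp only [mseq, vseq]
  split_ifs with h1 h2 h3 h4 <;> simp_all <;> ring

theorem lseq_nonneg (i : ℕ) : 0 ≤ lseq Y y X x i := by
  simp only [lseq]; split_ifs <;> norm_num

theorem useq_nonneg (i : ℕ) : 0 ≤ useq Y y X x i := by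
  simp only [useq]
  split_ifs
  · norm_num
  · norm_num
  · exact pseq_nonneg Y y X x hY hy hX hx i

theorem vseq_nonneg (i : ℕ) : 0 ≤ vseq Y y X x i := by
  simp only [vseq]
  split_ifs
  · norm_num
  · exact mul_nonneg (hy i) (hX (i+1))

theorem mseq_nonneg (i : ℕ) : 0 ≤ mseq Y y X x i := by
  simp only [mseq]
  split_ifs
  · exact mul_nonneg (hY (i+1)) (hx i)
  · norm_num
  · exact div_nonneg (mul_nonneg (hY (i+1)) (hx i)) (pseq_nonneg Y y X x hY hy hX hx i)

theorem diag_succ (i : ℕ) :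
    lseq Y y X x (i+1) * useq Y y X x (i+1) + mseq Y y X x i * vseq Y y X x i
      = Y (i+1) * X (i+1) + y (i+1) * x (i+1) := by
  rw [lu_eq Y y X x hY hy hX hx, mv_eq Y y X x hY hy hX hx]
  simp only [pseq]
  ring

theorem diag_zero :
    lseq Y y X x 0 * useq Y y X x 0 = Y 0 * X 0 + y 0 * x 0 := by
  rw [lu_eq Y y X x hY hy hX hx]
  simp [pseq]

end Stmt0Aux


/-- A square (or rectangular) lower bidiagonal matrix: nonzero entries only at
positions `(i,i)` and `(i+1,i)`. -/
def IsLowerBidiag {a b : ℕ} (M : Matrix (Fin a) (Fin b) ℝ) : Prop :=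
  ∀ (i : Fin a) (j : Fin b), (i : ℕ) ≠ (j : ℕ) → (i : ℕ) ≠ (j : ℕ) + 1 → M i j = 0

/-- An upper bidiagonal matrix: nonzero entries only at positions `(i,i)` and `(i,i+1)`. -/
def IsUpperBidiag {a b : ℕ} (M : Matrix (Fin a) (Fin b) ℝ) : Prop :=
  ∀ (i : Fin a) (j : Fin b), (i : ℕ) ≠ (j : ℕ) → (j : ℕ) ≠ (i : ℕ) + 1 → M i j = 0

/-- All entries nonnegative. -/
def EntrywiseNonneg {a b : ℕ} (M : Matrix (Fin a) (Fin b) ℝ) : Prop :=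
  ∀ i j, 0 ≤ M i j

/-- a nonnegative upper bidiagonal times a nonnegative lower bidiagonal
matrix can be refactored as a nonnegative lower bidiagonal times a nonnegative upper
bidiagonal matrix. -/
theorem stmt0 (n : ℕ) (U L : Matrix (Fin n) (Fin n) ℝ)
    (hU : IsUpperBidiag U) (hUpos : EntrywiseNonneg U)
    (hL : IsLowerBidiag L) (hLpos : EntrywiseNonneg L) :
    ∃ L' U' : Matrix (Fin n) (Fin n) ℝ,
      IsLowerBidiag L' ∧ EntrywiseNonneg L' ∧
      IsUpperBidiag U' ∧ EntrywiseNonneg U' ∧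
      U * L = L' * U' := by
  classical
  set Y : ℕ → ℝ := fun i => if h : i < n then U ⟨i, h⟩ ⟨i, h⟩ else 0 with hYdef
  set ys : ℕ → ℝ :=
    fun i => if h : i + 1 < n then U ⟨i, Nat.lt_of_succ_lt h⟩ ⟨i + 1, h⟩ else 0 with hysdef
  set X : ℕ → ℝ := fun i => if h : i < n then L ⟨i, h⟩ ⟨i, h⟩ else 0 with hXdef
  set xs : ℕ → ℝ :=
    fun i => if h : i + 1 < n then L ⟨i + 1, h⟩ ⟨i, Nat.lt_of_succ_lt h⟩ else 0 with hxsdef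
  have hY : ∀ i, 0 ≤ Y i := by
    intro i; simp only [hYdef]; split_ifs
    exacts [hUpos _ _, le_rfl]
  have hys : ∀ i, 0 ≤ ys i := by
    intro i; simp only [hysdef]; split_ifs
    exacts [hUpos _ _, le_rfl]
  have hX : ∀ i, 0 ≤ X i := by
    intro i; simp only [hXdef]; split_ifs
    exacts [hLpos _ _, le_rfl]
  have hxs : ∀ i, 0 ≤ xs i := by
    intro i; simp only [hxsdef]; split_ifs
    exacts [hLpos _ _, le_rfl]
  -- entry identification lemmas
  have hYe : ∀ i : Fin n, Y (i : ℕ) = U i i := by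
    intro i; simp only [hYdef]; rw [dif_pos i.isLt]
  have hXe : ∀ i : Fin n, X (i : ℕ) = L i i := by
    intro i; simp only [hXdef]; rw [dif_pos i.isLt]
  have hyse : ∀ (i : Fin n) (h : (i : ℕ) + 1 < n), ys (i : ℕ) = U i ⟨(i : ℕ) + 1, h⟩ := by
    intro i h; simp only [hysdef]; rw [dif_pos h]
  have hxse : ∀ (i : Fin n) (h : (i : ℕ) + 1 < n), xs (i : ℕ) = L ⟨(i : ℕ) + 1, h⟩ i := by
    intro i h; simp only [hxsdef]; rw [dif_pos h]
  have hys0 : ∀ i : ℕ, ¬ (i + 1 < n) → ys i = 0 := by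
    intro i h; simp only [hysdef]; rw [dif_neg h]
  have hxs0 : ∀ i : ℕ, ¬ (i + 1 < n) → xs i = 0 := by
    intro i h; simp only [hxsdef]; rw [dif_neg h]
  refine ⟨Matrix.of (fun i j => if (i : ℕ) = (j : ℕ) then lseq Y ys X xs (i : ℕ)
      else if (i : ℕ) = (j : ℕ) + 1 then mseq Y ys X xs (j : ℕ) else 0),
    Matrix.of (fun i j => if (i : ℕ) = (j : ℕ) then useq Y ys X xs (i : ℕ)
      else if (j : ℕ) = (i : ℕ) + 1 then vseq Y ys X xs (i : ℕ) else 0),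
    ?_, ?_, ?_, ?_, ?_⟩
  · intro i j h1 h2
    simp only [Matrix.of_apply, if_neg h1, if_neg h2]
  · intro i j
    simp only [Matrix.of_apply]
    split_ifs
    · exact lseq_nonneg Y ys X xs hY hys hX hxs _
    · exact mseq_nonneg Y ys X xs hY hys hX hxs _
    · exact le_rfl
  · intro i j h1 h2
    simp only [Matrix.of_apply, if_neg h1, if_neg h2]
  · intro i j
    simp only [Matrix.of_apply]
    split_ifs
    · exact useq_nonneg Y ys X xs hY hys hX hxs _
    · exact vseq_nonneg Y ys X xs hY hys hX hxs _
    · exact le_rfl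
  · ext i j
    rw [Matrix.mul_apply, Matrix.mul_apply]
    simp only [Matrix.of_apply]
    by_cases hd1 : (i : ℕ) = (j : ℕ)
    · have hij : i = j := Fin.eq_of_val_eq hd1
      subst hij
      have hLHS : ∑ k, U i k * L k i = Y (i : ℕ) * X (i : ℕ) + ys (i : ℕ) * xs (i : ℕ) := by
        by_cases h1 : (i : ℕ) + 1 < n
        · rw [sum_two' _ i ⟨(i : ℕ) + 1, h1⟩
            (by intro he; have := congrArg Fin.val he; simp only [Fin.val_mk] at this; omega)
            (fun k hk1 hk2 => by
              have hv1 : (i : ℕ) ≠ (k : ℕ) := fun h => hk1 (Fin.eq_of_val_eq h.symm)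
              have hv2 : (k : ℕ) ≠ (i : ℕ) + 1 := by
                intro h
                exact hk2 (Fin.eq_of_val_eq (by simp only [Fin.val_mk]; exact h))
              rw [hU i k hv1 hv2, zero_mul])]
          rw [hYe i, hXe i, hyse i h1, hxse i h1]
        · rw [sum_one' _ i (fun k hk => by
            have hv1 : (i : ℕ) ≠ (k : ℕ) := fun h => hk (Fin.eq_of_val_eq h.symm)
            have hv2 : (k : ℕ) ≠ (i : ℕ) + 1 := by omega
            rw [hU i k hv1 hv2, zero_mul])]
          rw [hYe i, hXe i, hys0 _ h1, hxs0 _ h1]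
          ring
      rw [hLHS]
      by_cases h0 : 0 < (i : ℕ)
      · obtain ⟨i0, hi0⟩ : ∃ i0, (i : ℕ) = i0 + 1 := ⟨(i : ℕ) - 1, by omega⟩
        have hlt : i0 < n := by omega
        rw [sum_two' _ i ⟨i0, hlt⟩
          (by intro he; have := congrArg Fin.val he; simp only [Fin.val_mk] at this; omega)
          (fun k hk1 hk2 => by
            have hv1 : (i : ℕ) ≠ (k : ℕ) := fun h => hk1 (Fin.eq_of_val_eq h.symm)
            have hv2 : (k : ℕ) ≠ i0 := by
              intro h
              exact hk2 (Fin.eq_of_val_eq (by simp only [Fin.val_mk]; exact h))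
            split_ifs <;> first | omega | simp)]
        simp only [Fin.val_mk, if_true]
        rw [if_neg (show ¬ ((i : ℕ) = i0) by omega), if_pos hi0,
          if_neg (show ¬ (i0 = (i : ℕ)) by omega), if_pos hi0, hi0]
        exact (diag_succ Y ys X xs hY hys hX hxs i0).symm
      · have hi0 : (i : ℕ) = 0 := by omega
        rw [sum_one' _ i (fun k hk => by
          have hv1 : (i : ℕ) ≠ (k : ℕ) := fun h => hk (Fin.eq_of_val_eq h.symm)
          split_ifs <;> first | omega | simp)]
        rw [if_pos rfl, if_pos rfl, hi0]
        exact (diag_zero Y ys X xs hY hys hX hxs).symm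
    · by_cases hd2 : (j : ℕ) = (i : ℕ) + 1
      · -- superdiagonal
        have h1 : (i : ℕ) + 1 < n := hd2 ▸ j.isLt
        have hLHS : ∑ k, U i k * L k j = ys (i : ℕ) * X ((i : ℕ) + 1) := by
          rw [sum_one' _ j (fun k hk => by
            have hkj : (k : ℕ) ≠ (j : ℕ) := fun h => hk (Fin.eq_of_val_eq h)
            by_cases hki : (k : ℕ) = (i : ℕ)
            · rw [hL k j (by omega) (by omega), mul_zero]
            · rw [hU i k (fun h => hki h.symm) (by omega), zero_mul])]
          have hj : j = ⟨(i : ℕ) + 1, h1⟩ := Fin.eq_of_val_eq hd2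
          rw [hj, ← hyse i h1]
          congr 1
          rw [hXe ⟨(i : ℕ) + 1, h1⟩]
        rw [hLHS]
        rw [sum_one' _ i (fun k hk => by
          have hv1 : (i : ℕ) ≠ (k : ℕ) := fun h => hk (Fin.eq_of_val_eq h.symm)
          split_ifs <;> first | omega | simp)]
        rw [if_pos rfl, if_neg hd1, if_pos hd2]
        exact (lv_eq Y ys X xs hY hys hX hxs (i : ℕ)).symm
      · by_cases hd3 : (i : ℕ) = (j : ℕ) + 1
        · -- subdiagonal
          have h1 : (j : ℕ) + 1 < n := hd3 ▸ i.isLt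
          have hLHS : ∑ k, U i k * L k j = Y ((j : ℕ) + 1) * xs (j : ℕ) := by
            rw [sum_one' _ i (fun k hk => by
              have hki : (k : ℕ) ≠ (i : ℕ) := fun h => hk (Fin.eq_of_val_eq h)
              by_cases hki2 : (k : ℕ) = (i : ℕ) + 1
              · rw [hL k j (by omega) (by omega), mul_zero]
              · rw [hU i k (fun h => hki h.symm) hki2, zero_mul])]
            have hi : i = ⟨(j : ℕ) + 1, h1⟩ := Fin.eq_of_val_eq hd3
            rw [hi, ← hYe ⟨(j : ℕ) + 1, h1⟩, ← hxse j h1]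
          rw [hLHS]
          rw [sum_one' _ j (fun k hk => by
            have hv1 : (k : ℕ) ≠ (j : ℕ) := fun h => hk (Fin.eq_of_val_eq h)
            split_ifs <;> first | omega | simp)]
          rw [if_neg hd1, if_pos hd3, if_pos rfl]
          exact (mu_eq Y ys X xs hY hys hX hxs (j : ℕ)).symm
        · -- far away: both sides zero
          rw [Finset.sum_eq_zero, Finset.sum_eq_zero]
          · intro k _
            split_ifs <;> first | omega | simp
          · intro k _
            by_cases hv1 : (k : ℕ) = (i : ℕ)
            · rw [hL k j (by omega) (by omega), mul_zero]
            · by_cases hv2 : (k : ℕ) = (i : ℕ) + 1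
              · rw [hL k j (by omega) (by omega), mul_zero]
              · rw [hU i k (fun h => hv1 h.symm) hv2, zero_mul]
end

section
/- Let U and U' be n×n upper bidiagonal matrices with all entries nonnegative. Then there exist an n×n upper bidiagonal matrix V with all entries nonnegative, and an n×n upper bidiagonal matrix W with all entries nonnegative whose superdiagonal entry in position (1,2) is zero, such that U·U' = V·W. -/
open Matrix

noncomputable def udiag (n : ℕ) (U : Matrix (Fin n) (Fin n) ℝ) (i : ℕ) : ℝ :=
  if h : i < n then U ⟨i, h⟩ ⟨i, h⟩ else 0

noncomputable def usup (n : ℕ) (U : Matrix (Fin n) (Fin n) ℝ) (i : ℕ) : ℝ :=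
  if h : i + 1 < n then U ⟨i, Nat.lt_of_succ_lt h⟩ ⟨i + 1, h⟩ else 0

noncomputable def FGD (n : ℕ) (U U' : Matrix (Fin n) (Fin n) ℝ) : ℕ → ℝ × ℝ × ℝ
  | 0 => (udiag n U 0, udiag n U' 0, 0)
  | (i+1) =>
    let d := (FGD n U U' i).1
    let g := (FGD n U U' i).2.2
    let r := (udiag n U i * usup n U' i + usup n U i * udiag n U' (i+1)) - d * g
    if usup n U i * usup n U' (i+1) = 0 then
      (udiag n U (i+1) * udiag n U' (i+1), 1, 0)
    else
      (if r = 0 then 0 else (udiag n U (i+1) * udiag n U' (i+1)) / r,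
        r, usup n U i * usup n U' (i+1))

noncomputable def Ed (n : ℕ) (U U' : Matrix (Fin n) (Fin n) ℝ) (i : ℕ) : ℝ :=
  if usup n U i * usup n U' (i+1) = 0 then
    (udiag n U i * usup n U' i + usup n U i * udiag n U' (i+1))
      - (FGD n U U' i).1 * (FGD n U U' i).2.2
  else 1

/-- the product of two nonnegative upper bidiagonal matrices `U * U'`
can be refactored as `V * W` with `V`, `W` nonnegative upper bidiagonal and the
`(1,2)` superdiagonal entry of `W` equal to zero. -/
theorem stmt1 (n : ℕ) (U U' : Matrix (Fin n) (Fin n) ℝ)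
    (hU : IsUpperBidiag U) (hUpos : EntrywiseNonneg U)
    (hU' : IsUpperBidiag U') (hU'pos : EntrywiseNonneg U') :
    ∃ V W : Matrix (Fin n) (Fin n) ℝ,
      IsUpperBidiag V ∧ EntrywiseNonneg V ∧
      IsUpperBidiag W ∧ EntrywiseNonneg W ∧
      (∀ (h0 : 0 < n) (h1 : 1 < n), W ⟨0, h0⟩ ⟨1, h1⟩ = 0) ∧
      U * U' = V * W := by
  set u := udiag n U with hu
  set s := usup n U with hs
  set u' := udiag n U' with hu'
  set s' := usup n U' with hs'
  set D := fun i => (FGD n U U' i).1 with hD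
  set F := fun i => (FGD n U U' i).2.1 with hF
  set G := fun i => (FGD n U U' i).2.2 with hG
  set E := Ed n U U' with hE
  -- nonnegativity of the band entries
  have hun : ∀ i, 0 ≤ u i := by
    intro i; rw [hu, udiag]; split
    · exact hUpos _ _
    · exact le_refl 0
  have hsn : ∀ i, 0 ≤ s i := by
    intro i; rw [hs, usup]; split
    · exact hUpos _ _
    · exact le_refl 0
  have hu'n : ∀ i, 0 ≤ u' i := by
    intro i; rw [hu', udiag]; split
    · exact hU'pos _ _
    · exact le_refl 0
  have hs'n : ∀ i, 0 ≤ s' i := by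
    intro i; rw [hs', usup]; split
    · exact hU'pos _ _
    · exact le_refl 0
  -- unfolding of the recursion
  have hstep : ∀ i : ℕ, FGD n U U' (i+1) =
      if s i * s' (i+1) = 0 then
        (u (i+1) * u' (i+1), 1, 0)
      else
        (if (u i * s' i + s i * u' (i+1)) - D i * G i = 0 then 0
          else (u (i+1) * u' (i+1)) / ((u i * s' i + s i * u' (i+1)) - D i * G i),
          (u i * s' i + s i * u' (i+1)) - D i * G i, s i * s' (i+1)) :=
    fun i => rfl
  have hEeq : ∀ i : ℕ, E i =
      if s i * s' (i+1) = 0 then (u i * s' i + s i * u' (i+1)) - D i * G i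
      else 1 := fun i => rfl
  -- the key invariant
  have main : ∀ i, 0 ≤ D i ∧ 0 ≤ F i ∧ 0 ≤ G i ∧
      D i * F i = u i * u' i ∧ D i * G i ≤ u i * s' i := by
    intro i
    induction i with
    | zero =>
      refine ⟨hun 0, hu'n 0, le_refl 0, rfl, ?_⟩
      have : D 0 * G 0 = 0 := by
        have : G 0 = 0 := rfl
        rw [this, mul_zero]
      rw [this]
      exact mul_nonneg (hun 0) (hs'n 0)
    | succ i ih =>
      obtain ⟨hd, hf, hg, hdf, hdg⟩ := ih
      have key : s i * u' (i+1) ≤ (u i * s' i + s i * u' (i+1)) - D i * G i := by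
        linarith
      have hr0 : 0 ≤ (u i * s' i + s i * u' (i+1)) - D i * G i :=
        le_trans (mul_nonneg (hsn i) (hu'n (i+1))) key
      have etup : (D (i+1), F (i+1), G (i+1)) = FGD n U U' (i+1) := rfl
      rw [hstep i] at etup
      by_cases hc : s i * s' (i+1) = 0
      · rw [if_pos hc] at etup
        have e1 : D (i+1) = u (i+1) * u' (i+1) := congrArg Prod.fst etup
        have e2 : F (i+1) = 1 := congrArg (fun p => p.2.1) etup
        have e3 : G (i+1) = 0 := congrArg (fun p => p.2.2) etup
        refine ⟨?_, ?_, ?_, ?_, ?_⟩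
        · rw [e1]; exact mul_nonneg (hun _) (hu'n _)
        · rw [e2]; exact zero_le_one
        · rw [e3]
        · rw [e1, e2, mul_one]
        · rw [e3, mul_zero]; exact mul_nonneg (hun _) (hs'n _)
      · rw [if_neg hc] at etup
        have e2 : F (i+1) = (u i * s' i + s i * u' (i+1)) - D i * G i :=
          congrArg (fun p => p.2.1) etup
        have e3 : G (i+1) = s i * s' (i+1) := congrArg (fun p => p.2.2) etup
        have hspos : 0 < s i := by
          rcases lt_or_eq_of_le (hsn i) with h | h
          · exact h
          · exact absurd (by rw [← h, zero_mul]) hc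
        by_cases hr : (u i * s' i + s i * u' (i+1)) - D i * G i = 0
        · have e1 : D (i+1) = 0 := by
            have := congrArg Prod.fst etup
            simpa [hr] using this
          have hu'z : u' (i+1) = 0 := by
            have h1 : s i * u' (i+1) ≤ 0 := by linarith
            nlinarith [hu'n (i+1), hspos]
          refine ⟨?_, ?_, ?_, ?_, ?_⟩
          · rw [e1]
          · rw [e2]; exact hr0
          · rw [e3]; exact mul_nonneg (hsn i) (hs'n (i+1))
          · rw [e1, zero_mul, hu'z, mul_zero]
          · rw [e1, zero_mul]; exact mul_nonneg (hun _) (hs'n _)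
        · have e1 : D (i+1) = (u (i+1) * u' (i+1)) /
              ((u i * s' i + s i * u' (i+1)) - D i * G i) := by
            have := congrArg Prod.fst etup
            simpa [hr] using this
          have hrpos : 0 < (u i * s' i + s i * u' (i+1)) - D i * G i :=
            lt_of_le_of_ne hr0 (Ne.symm hr)
          refine ⟨?_, ?_, ?_, ?_, ?_⟩
          · rw [e1]; exact div_nonneg (mul_nonneg (hun _) (hu'n _)) hr0
          · rw [e2]; exact hr0
          · rw [e3]; exact mul_nonneg (hsn i) (hs'n (i+1))
          · rw [e1, e2]; exact div_mul_cancel₀ _ hr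
          · rw [e1, e3, div_mul_eq_mul_div, div_le_iff₀ hrpos]
            nlinarith [mul_nonneg (mul_nonneg (hun (i+1)) (hs'n (i+1)))
              (sub_nonneg.2 key), mul_nonneg (hun (i+1)) (hu'n (i+1)),
              mul_nonneg (hsn i) (hs'n (i+1))]
  have hEn : ∀ i, 0 ≤ E i := by
    intro i
    rw [hEeq i]
    split
    · linarith [(main i).2.2.2.2, mul_nonneg (hsn i) (hu'n (i+1))]
    · exact zero_le_one
  have Hef : ∀ i, D i * G i + E i * F (i+1) = u i * s' i + s i * u' (i+1) := by
    intro i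
    have etup : (D (i+1), F (i+1), G (i+1)) = FGD n U U' (i+1) := rfl
    rw [hstep i] at etup
    rw [hEeq i]
    by_cases hc : s i * s' (i+1) = 0
    · rw [if_pos hc] at etup ⊢
      have e2 : F (i+1) = 1 := congrArg (fun p => p.2.1) etup
      rw [e2, mul_one]; ring
    · rw [if_neg hc] at etup ⊢
      have e2 : F (i+1) = (u i * s' i + s i * u' (i+1)) - D i * G i :=
        congrArg (fun p => p.2.1) etup
      rw [e2, one_mul]; ring
  have Heg : ∀ i, E i * G (i+1) = s i * s' (i+1) := by
    intro i
    have etup : (D (i+1), F (i+1), G (i+1)) = FGD n U U' (i+1) := rfl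
    rw [hstep i] at etup
    rw [hEeq i]
    by_cases hc : s i * s' (i+1) = 0
    · rw [if_pos hc] at etup ⊢
      have e3 : G (i+1) = 0 := congrArg (fun p => p.2.2) etup
      rw [e3, mul_zero, hc]
    · rw [if_neg hc] at etup ⊢
      have e3 : G (i+1) = s i * s' (i+1) := congrArg (fun p => p.2.2) etup
      rw [e3, one_mul]
  -- the matrices
  set V : Matrix (Fin n) (Fin n) ℝ :=
    fun p q => if (q:ℕ) = (p:ℕ) then D p else if (q:ℕ) = (p:ℕ)+1 then E p else 0
    with hVdef
  set W : Matrix (Fin n) (Fin n) ℝ :=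
    fun p q => if (q:ℕ) = (p:ℕ) then F p else if (q:ℕ) = (p:ℕ)+1 then G p else 0
    with hWdef
  have hVe : ∀ p q : Fin n, V p q =
      if (q:ℕ) = (p:ℕ) then D p else if (q:ℕ) = (p:ℕ)+1 then E p else 0 :=
    fun p q => rfl
  have hWe : ∀ p q : Fin n, W p q =
      if (q:ℕ) = (p:ℕ) then F p else if (q:ℕ) = (p:ℕ)+1 then G p else 0 :=
    fun p q => rfl
  have hVbd : IsUpperBidiag V := by
    intro p q h1 h2
    rw [hVe, if_neg (Ne.symm h1), if_neg h2]
  have hWbd : IsUpperBidiag W := by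
    intro p q h1 h2
    rw [hWe, if_neg (Ne.symm h1), if_neg h2]
  have hVd : ∀ p : Fin n, V p p = D p := fun p => by rw [hVe, if_pos rfl]
  have hWd : ∀ p : Fin n, W p p = F p := fun p => by rw [hWe, if_pos rfl]
  have hVs : ∀ (p : Fin n) (h : (p:ℕ)+1 < n), V p ⟨(p:ℕ)+1, h⟩ = E p := by
    intro p h
    show (if (p:ℕ)+1 = (p:ℕ) then D p else
      if (p:ℕ)+1 = (p:ℕ)+1 then E p else 0) = E p
    rw [if_neg (by omega), if_pos rfl]
  have hWs : ∀ (p : Fin n) (h : (p:ℕ)+1 < n), W p ⟨(p:ℕ)+1, h⟩ = G p := by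
    intro p h
    show (if (p:ℕ)+1 = (p:ℕ) then F p else
      if (p:ℕ)+1 = (p:ℕ)+1 then G p else 0) = G p
    rw [if_neg (by omega), if_pos rfl]
  -- band-entry identities for U and U'
  have hUd : ∀ p : Fin n, U p p = u p := by
    intro p
    rw [hu]
    simp [udiag, p.isLt]
  have hU'd : ∀ p : Fin n, U' p p = u' p := by
    intro p
    rw [hu']
    simp [udiag, p.isLt]
  have hUs : ∀ (p : Fin n) (h : (p:ℕ)+1 < n), U p ⟨(p:ℕ)+1, h⟩ = s p := by
    intro p h
    rw [hs]
    simp [usup, h]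
  have hU's : ∀ (p : Fin n) (h : (p:ℕ)+1 < n), U' p ⟨(p:ℕ)+1, h⟩ = s' p := by
    intro p h
    rw [hs']
    simp [usup, h]
  -- vanishing of s, s' beyond the band
  have hsz : ∀ i : ℕ, ¬ (i + 1 < n) → s i = 0 := by
    intro i h; rw [hs, usup, dif_neg h]
  have hs'z : ∀ i : ℕ, ¬ (i + 1 < n) → s' i = 0 := by
    intro i h; rw [hs', usup, dif_neg h]
  -- row formula for a product with bidiagonal left factor
  have mulr : ∀ (M N : Matrix (Fin n) (Fin n) ℝ), IsUpperBidiag M → ∀ i j : Fin n,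
      (M * N) i j = M i i * N i j +
        (if h : (i:ℕ)+1 < n then M i ⟨(i:ℕ)+1, h⟩ * N ⟨(i:ℕ)+1, h⟩ j else 0) := by
    intro M N hM i j
    rw [Matrix.mul_apply]
    by_cases h : (i:ℕ)+1 < n
    · rw [dif_pos h]
      have hne : i ≠ (⟨(i:ℕ)+1, h⟩ : Fin n) := by
        intro hcon
        have := congrArg Fin.val hcon
        simp at this
      have hpair : ∑ k ∈ ({i, ⟨(i:ℕ)+1, h⟩} : Finset (Fin n)), M i k * N k j =
          M i i * N i j + M i ⟨(i:ℕ)+1, h⟩ * N ⟨(i:ℕ)+1, h⟩ j :=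
        Finset.sum_pair hne
      rw [← hpair]
      apply (Finset.sum_subset (Finset.subset_univ _) ?_).symm
      intro k _ hk
      simp only [Finset.mem_insert, Finset.mem_singleton] at hk
      push_neg at hk
      rw [hM i k ?_ ?_, zero_mul]
      · intro hik; exact hk.1 (Fin.ext hik.symm)
      · intro hk1; exact hk.2 (Fin.ext hk1)
    · rw [dif_neg h, add_zero]
      apply Finset.sum_eq_single_of_mem i (Finset.mem_univ i)
      intro k _ hk
      rw [hM i k ?_ ?_, zero_mul]
      · intro hik; exact hk (Fin.ext hik.symm)
      · intro hk1
        exact h (hk1 ▸ k.isLt)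
  refine ⟨V, W, hVbd, ?_, hWbd, ?_, ?_, ?_⟩
  · intro p q
    rw [hVe]
    split
    · exact (main p).1
    split
    · exact hEn p
    · exact le_refl 0
  · intro p q
    rw [hWe]
    split
    · exact (main p).2.1
    split
    · exact (main p).2.2.1
    · exact le_refl 0
  · intro h0 h1
    show (if (1:ℕ) = (0:ℕ) then F 0 else if (1:ℕ) = 0+1 then G 0 else 0) = 0
    rw [if_neg (by omega), if_pos rfl]
    rfl
  · ext i j
    rw [mulr U U' hU i j, mulr V W hVbd i j]
    by_cases hji : (j:ℕ) = (i:ℕ)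
    · have hj : j = i := Fin.ext hji
      subst hj
      rw [hUd, hU'd, hVd, hWd, (main j).2.2.2.1]
      congr 1
      by_cases hin : (j:ℕ)+1 < n
      · rw [dif_pos hin, dif_pos hin]
        have z1 : U' ⟨(j:ℕ)+1, hin⟩ j = 0 := by
          refine hU' _ _ ?_ ?_
          · show (j:ℕ)+1 ≠ (j:ℕ); omega
          · show (j:ℕ) ≠ (j:ℕ)+1+1; omega
        have z2 : W ⟨(j:ℕ)+1, hin⟩ j = 0 := by
          refine hWbd _ _ ?_ ?_
          · show (j:ℕ)+1 ≠ (j:ℕ); omega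
          · show (j:ℕ) ≠ (j:ℕ)+1+1; omega
        rw [z1, z2, mul_zero, mul_zero]
      · rw [dif_neg hin, dif_neg hin]
    · by_cases hji1 : (j:ℕ) = (i:ℕ)+1
      · have hin : (i:ℕ)+1 < n := hji1 ▸ j.isLt
        have hj : j = ⟨(i:ℕ)+1, hin⟩ := Fin.ext hji1
        subst hj
        rw [dif_pos hin, dif_pos hin, hUd, hVd]
        rw [hUs i hin, hU's i hin, hVs i hin, hWs i hin]
        have e1 : U' ⟨(i:ℕ)+1, hin⟩ ⟨(i:ℕ)+1, hin⟩ = u' ((i:ℕ)+1) :=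
          hU'd ⟨(i:ℕ)+1, hin⟩
        have e2 : W ⟨(i:ℕ)+1, hin⟩ ⟨(i:ℕ)+1, hin⟩ = F ((i:ℕ)+1) :=
          hWd ⟨(i:ℕ)+1, hin⟩
        rw [e1, e2]
        exact (Hef (i:ℕ)).symm
      · by_cases hji2 : (j:ℕ) = (i:ℕ)+2
        · have hi2n : (i:ℕ)+2 < n := hji2 ▸ j.isLt
          have hin : (i:ℕ)+1 < n := by omega
          have hj : j = ⟨(i:ℕ)+2, hi2n⟩ := Fin.ext hji2
          subst hj
          rw [dif_pos hin, dif_pos hin]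
          have z1 : U' i ⟨(i:ℕ)+2, hi2n⟩ = 0 := by
            refine hU' _ _ ?_ ?_
            · show (i:ℕ) ≠ (i:ℕ)+2; omega
            · show (i:ℕ)+2 ≠ (i:ℕ)+1; omega
          have z2 : W i ⟨(i:ℕ)+2, hi2n⟩ = 0 := by
            refine hWbd _ _ ?_ ?_
            · show (i:ℕ) ≠ (i:ℕ)+2; omega
            · show (i:ℕ)+2 ≠ (i:ℕ)+1; omega
          have e1 : U' ⟨(i:ℕ)+1, hin⟩ ⟨(i:ℕ)+2, hi2n⟩ = s' ((i:ℕ)+1) :=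
            hU's ⟨(i:ℕ)+1, hin⟩ hi2n
          have e2 : W ⟨(i:ℕ)+1, hin⟩ ⟨(i:ℕ)+2, hi2n⟩ = G ((i:ℕ)+1) :=
            hWs ⟨(i:ℕ)+1, hin⟩ hi2n
          have e3 : U i ⟨(i:ℕ)+1, hin⟩ = s (i:ℕ) := hUs i hin
          have e4 : V i ⟨(i:ℕ)+1, hin⟩ = E (i:ℕ) := hVs i hin
          rw [z1, z2, e1, e2, e3, e4, mul_zero, mul_zero, zero_add, zero_add]
          exact (Heg (i:ℕ)).symm
        · -- generic off-band entry: everything vanishes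
          have z1 : U' i j = 0 := hU' _ _ (Ne.symm hji) hji1
          have z2 : W i j = 0 := hWbd _ _ (Ne.symm hji) hji1
          rw [z1, z2, mul_zero, mul_zero]
          by_cases hin : (i:ℕ)+1 < n
          · rw [dif_pos hin, dif_pos hin]
            have z3 : U' ⟨(i:ℕ)+1, hin⟩ j = 0 := by
              refine hU' _ _ ?_ ?_
              · show (i:ℕ)+1 ≠ (j:ℕ); omega
              · show (j:ℕ) ≠ (i:ℕ)+1+1; omega
            have z4 : W ⟨(i:ℕ)+1, hin⟩ j = 0 := by
              refine hWbd _ _ ?_ ?_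
              · show (i:ℕ)+1 ≠ (j:ℕ); omega
              · show (j:ℕ) ≠ (i:ℕ)+1+1; omega
            rw [z3, z4, mul_zero, mul_zero]
          · rw [dif_neg hin, dif_neg hin]
end

section
/- Let L be an n×n invertible lower bidiagonal matrix with nonnegative entries. Then there exist an n×n orthogonal matrix G and an n×n invertible upper bidiagonal matrix U with nonnegative entries such that L·G = U, and hence L⁻¹ = G·U⁻¹. -/
open Matrix

/- ### Auxiliary machinery -/

theorem sum_single' {N : ℕ} (f : Fin N → ℝ) (p : Fin N)
    (h : ∀ k, k ≠ p → f k = 0) : ∑ k, f k = f p :=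
  Finset.sum_eq_single_of_mem p (Finset.mem_univ p) (fun k _ hk => h k hk)

theorem sum_pair' {N : ℕ} (f : Fin N → ℝ) (p q : Fin N) (hpq : p ≠ q)
    (h : ∀ k, k ≠ p → k ≠ q → f k = 0) : ∑ k, f k = f p + f q := by
  rw [← Finset.sum_pair hpq]
  exact (Finset.sum_subset (Finset.subset_univ _)
    (fun k _ hk => by
      simp only [Finset.mem_insert, Finset.mem_singleton, not_or] at hk
      exact h k hk.1 hk.2)).symm

noncomputable def dseq (m : ℕ) (a b : Fin (m+1) → ℝ) : Fin (m+1) → ℝ :=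
  Fin.reverseInduction (Real.sqrt ((a (Fin.last m))^2 + (b (Fin.last m))^2))
    (fun i ds => Real.sqrt ((a i.castSucc)^2 + (b i.castSucc)^2
      - (a i.castSucc * b i.succ / ds)^2))

noncomputable def eseq (m : ℕ) (a b : Fin (m+1) → ℝ) : Fin (m+1) → ℝ :=
  Fin.lastCases 0 (fun i => a i.castSucc * b i.succ / dseq m a b i.succ)

theorem dseq_last (m : ℕ) (a b : Fin (m+1) → ℝ) :
    dseq m a b (Fin.last m) = Real.sqrt ((a (Fin.last m))^2 + (b (Fin.last m))^2) := by
  simp [dseq]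

theorem dseq_castSucc (m : ℕ) (a b : Fin (m+1) → ℝ) (i : Fin m) :
    dseq m a b i.castSucc = Real.sqrt ((a i.castSucc)^2 + (b i.castSucc)^2
      - (a i.castSucc * b i.succ / dseq m a b i.succ)^2) := by
  simp [dseq]

theorem dseq_nonneg (m : ℕ) (a b : Fin (m+1) → ℝ) (i : Fin (m+1)) :
    0 ≤ dseq m a b i := by
  induction i using Fin.lastCases with
  | last => rw [dseq_last]; exact Real.sqrt_nonneg _
  | cast i => rw [dseq_castSucc]; exact Real.sqrt_nonneg _

theorem eseq_last (m : ℕ) (a b : Fin (m+1) → ℝ) : eseq m a b (Fin.last m) = 0 := by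
  simp [eseq]

theorem eseq_castSucc (m : ℕ) (a b : Fin (m+1) → ℝ) (i : Fin m) :
    eseq m a b i.castSucc = a i.castSucc * b i.succ / dseq m a b i.succ := by
  simp [eseq]

theorem dseq_key (m : ℕ) (a b : Fin (m+1) → ℝ) (ha : ∀ i, 0 < a i) :
    ∀ i, (b i)^2 < (dseq m a b i)^2 ∧
      (dseq m a b i)^2 + (eseq m a b i)^2 = (a i)^2 + (b i)^2 := by
  intro i
  induction i using Fin.reverseInduction with
  | last =>
      rw [dseq_last, eseq_last, Real.sq_sqrt (by positivity)]
      constructor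
      · nlinarith [ha (Fin.last m)]
      · ring
  | cast i ih =>
      have hDne : dseq m a b i.succ ≠ 0 := by
        intro h0
        rw [h0] at ih
        nlinarith [sq_nonneg (b i.succ), ih.1]
      have hDs : 0 < dseq m a b i.succ :=
        lt_of_le_of_ne (dseq_nonneg m a b i.succ) (Ne.symm hDne)
      have hA := ha i.castSucc
      have hfrac : (a i.castSucc * b i.succ / dseq m a b i.succ)^2 < (a i.castSucc)^2 := by
        rw [div_pow, mul_pow, div_lt_iff₀ (by positivity)]
        nlinarith [mul_lt_mul_of_pos_left ih.1 (pow_pos hA 2)]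
      have hX : (0:ℝ) ≤ (a i.castSucc)^2 + (b i.castSucc)^2
          - (a i.castSucc * b i.succ / dseq m a b i.succ)^2 := by
        nlinarith [sq_nonneg (b i.castSucc)]
      rw [dseq_castSucc, eseq_castSucc, Real.sq_sqrt hX]
      constructor
      · nlinarith [sq_nonneg (b i.castSucc)]
      · ring

theorem dseq_pos (m : ℕ) (a b : Fin (m+1) → ℝ) (ha : ∀ i, 0 < a i) (i : Fin (m+1)) :
    0 < dseq m a b i := by
  have h := (dseq_key m a b ha i).1
  rcases eq_or_lt_of_le (dseq_nonneg m a b i) with h0 | h0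
  · exfalso; rw [← h0] at h; nlinarith [sq_nonneg (b i)]
  · exact h0

theorem eseq_mul_dseq (m : ℕ) (a b : Fin (m+1) → ℝ) (ha : ∀ i, 0 < a i) (i : Fin m) :
    eseq m a b i.castSucc * dseq m a b i.succ = a i.castSucc * b i.succ := by
  rw [eseq_castSucc, div_mul_cancel₀]
  exact (dseq_pos m a b ha i.succ).ne'

theorem eseq_nonneg (m : ℕ) (a b : Fin (m+1) → ℝ) (ha : ∀ i, 0 < a i)
    (hb : ∀ i, 0 ≤ b i) (i : Fin (m+1)) : 0 ≤ eseq m a b i := by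
  induction i using Fin.lastCases with
  | last => rw [eseq_last]
  | cast i =>
      rw [eseq_castSucc]
      exact div_nonneg (mul_nonneg (ha _).le (hb _)) (dseq_nonneg m a b i.succ)

/- ### Main theorem -/

/-- for an invertible nonnegative lower bidiagonal matrix `L` there exist
an orthogonal matrix `G` and an invertible nonnegative upper bidiagonal matrix `U`
with `L * G = U`, hence `L⁻¹ = G * U⁻¹`. -/
theorem stmt3 (n : ℕ) (L : Matrix (Fin n) (Fin n) ℝ)
    (hL : IsLowerBidiag L) (hLpos : EntrywiseNonneg L) (hLinv : IsUnit L) :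
    ∃ G U : Matrix (Fin n) (Fin n) ℝ,
      Gᵀ * G = 1 ∧
      IsUpperBidiag U ∧ EntrywiseNonneg U ∧ IsUnit U ∧
      L * G = U ∧ L⁻¹ = G * U⁻¹ := by
  match n with
  | 0 =>
      refine ⟨1, 1, ?_, ?_, ?_, isUnit_one, ?_, ?_⟩
      · exact Subsingleton.elim _ _
      · intro i; exact i.elim0
      · intro i; exact i.elim0
      · exact Subsingleton.elim _ _
      · exact Subsingleton.elim _ _
  | (m+1) =>
  -- L is lower triangular, so its determinant is the product of the diagonal
  have hLtri : ∀ (i j : Fin (m+1)), i < j → L i j = 0 := by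
    intro i j hij
    have h : (i:ℕ) < (j:ℕ) := hij
    exact hL i j (by omega) (by omega)
  have hdetL : L.det = ∏ i, L i i :=
    det_of_lowerTriangular L (fun i j hij => hLtri i j hij)
  have hLdet : IsUnit L.det := (Matrix.isUnit_iff_isUnit_det L).mp hLinv
  have hdiag : ∀ i, 0 < L i i := by
    intro i
    have hne : L i i ≠ 0 := by
      intro h0
      have : L.det = 0 := by
        rw [hdetL]
        exact Finset.prod_eq_zero (Finset.mem_univ i) h0
      rw [this] at hLdet
      exact (by simpa using hLdet : False)
    exact lt_of_le_of_ne (hLpos i i) (Ne.symm hne)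
  -- scalar data
  set a : Fin (m+1) → ℝ := fun i => L i i with ha_def
  set b : Fin (m+1) → ℝ := Fin.cases 0 (fun i => L i.succ i.castSucc) with hb_def
  have hb_zero : b 0 = 0 := rfl
  have hb_succ : ∀ i : Fin m, b i.succ = L i.succ i.castSucc := fun i => by
    simp [hb_def]
  have ha : ∀ i, 0 < a i := hdiag
  have hb : ∀ i, 0 ≤ b i := by
    intro i
    induction i using Fin.cases with
    | zero => rw [hb_zero]
    | succ i => rw [hb_succ]; exact hLpos _ _
  set d : Fin (m+1) → ℝ := dseq m a b with hd_def
  set e : Fin (m+1) → ℝ := eseq m a b with he_def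
  have hkey := dseq_key m a b ha
  have hdpos : ∀ i, 0 < d i := dseq_pos m a b ha
  have he0 : ∀ i, 0 ≤ e i := eseq_nonneg m a b ha hb
  have hed : ∀ i : Fin m, e i.castSucc * d i.succ = a i.castSucc * b i.succ :=
    eseq_mul_dseq m a b ha
  have helast : e (Fin.last m) = 0 := eseq_last m a b
  -- the matrix U
  set U : Matrix (Fin (m+1)) (Fin (m+1)) ℝ :=
    Matrix.of (fun i j => if (j:ℕ) = (i:ℕ) then d i
      else if (j:ℕ) = (i:ℕ)+1 then e i else 0) with hU_def
  have hUapp : ∀ i j, U i j = (if (j:ℕ) = (i:ℕ) then d i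
      else if (j:ℕ) = (i:ℕ)+1 then e i else 0) := fun i j => rfl
  have hUdd : ∀ i, U i i = d i := by intro i; rw [hUapp]; simp
  have hUshape : ∀ (i j : Fin (m+1)), (j:ℕ) ≠ (i:ℕ) → (j:ℕ) ≠ (i:ℕ)+1 → U i j = 0 := by
    intro i j h1 h2; rw [hUapp, if_neg h1, if_neg h2]
  -- some entry facts about L
  have hLrow : ∀ (i k : Fin (m+1)), (k:ℕ) ≠ (i:ℕ) → (i:ℕ) ≠ (k:ℕ)+1 → L i k = 0 :=
    fun i k h1 h2 => hL i k (Ne.symm h1) h2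
  -- the central identity : U * Uᵀ = L * Lᵀ
  have hmain : U * Uᵀ = L * Lᵀ := by
    have key : ∀ i j : Fin (m+1), (i:ℕ) ≤ (j:ℕ) →
        (∑ k, U i k * U j k) = ∑ k, L i k * L j k := by
      intro i j hij
      rcases Nat.lt_or_ge (j:ℕ) ((i:ℕ)+1) with hcase | hcase
      · -- diagonal : i = j
        have hijeq : i = j := Fin.ext (by omega)
        subst hijeq
        have lhs_eq : (∑ k, U i k * U i k) = (d i)^2 + (e i)^2 := by
          induction i using Fin.lastCases with
          | last =>
              rw [sum_single' _ (Fin.last m) (fun k hk => by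
                have hkv : (k:ℕ) ≠ m := fun h => hk (Fin.ext (by simpa using h))
                have hkb : (k:ℕ) < m + 1 := k.isLt
                rw [hUshape _ _ (by simpa using hkv) (by simp; omega)]
                ring)]
              rw [hUdd, helast]
              ring
          | cast i =>
              rw [sum_pair' _ i.castSucc i.succ (by
                  intro h
                  have := congrArg Fin.val h
                  simp at this)
                (fun k hk1 hk2 => by
                  have h1 : (k:ℕ) ≠ (i.castSucc:ℕ) := fun h => hk1 (Fin.ext h)
                  have h2 : (k:ℕ) ≠ (i.castSucc:ℕ)+1 := fun h => hk2 (Fin.ext (by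
                    simpa [Fin.val_succ] using h))
                  rw [hUshape _ _ h1 h2]; ring)]
              have hv1 : U i.castSucc i.succ = e i.castSucc := by
                rw [hUapp]
                simp [Fin.val_succ]
              rw [hUdd, hv1]
              ring
        have rhs_eq : (∑ k, L i k * L i k) = (a i)^2 + (b i)^2 := by
          induction i using Fin.cases with
          | zero =>
              rw [sum_single' _ 0 (fun k hk => by
                have hkv : (k:ℕ) ≠ 0 := fun h => hk (Fin.ext (by simpa using h))
                rw [hLrow _ _ (by simpa using hkv) (by simp)]
                ring)]
              rw [hb_zero]
              simp [ha_def]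
              ring
          | succ i =>
              rw [sum_pair' _ i.succ i.castSucc (by
                  intro h
                  have := congrArg Fin.val h
                  simp at this)
                (fun k hk1 hk2 => by
                  have h1 : (k:ℕ) ≠ (i.succ:ℕ) := fun h => hk1 (Fin.ext h)
                  have h2 : (i.succ:ℕ) ≠ (k:ℕ)+1 := fun h => hk2 (Fin.ext (by
                    simp only [Fin.val_succ] at h
                    simp only [Fin.coe_castSucc]
                    omega))
                  rw [hLrow _ _ h1 h2]; ring)]
              rw [hb_succ]
              simp [ha_def]
              ring
        rw [lhs_eq, rhs_eq]
        exact (hkey i).2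
      · rcases Nat.lt_or_ge (j:ℕ) ((i:ℕ)+2) with hcase2 | hcase2
        · -- superdiagonal : j = i+1
          have him : (i:ℕ) < m := by have := j.isLt; omega
          obtain ⟨i', rfl⟩ : ∃ i' : Fin m, i = i'.castSucc :=
            ⟨⟨(i:ℕ), him⟩, Fin.ext rfl⟩
          have hjv : (j:ℕ) = (i':ℕ)+1 := by
            simp only [Fin.coe_castSucc] at hcase hcase2; omega
          have hjs : j = i'.succ := Fin.ext (by simp [Fin.val_succ, hjv])
          subst hjs
          have lhs_eq : (∑ k, U i'.castSucc k * U i'.succ k)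
              = e i'.castSucc * d i'.succ := by
            rw [sum_single' _ i'.succ (fun k hk => by
              have hk1 : (k:ℕ) ≠ (i':ℕ)+1 := fun h => hk (Fin.ext (by
                simpa [Fin.val_succ] using h))
              by_cases hk0 : (k:ℕ) = (i':ℕ)
              · rw [hUshape i'.succ k (by simpa [Fin.val_succ] using (by omega : (k:ℕ) ≠ (i':ℕ)+1))
                  (by simp [Fin.val_succ]; omega)]
                ring
              · rw [hUshape i'.castSucc k (by simpa using hk0) (by simpa using hk1)]
                ring)]
            have hv1 : U i'.castSucc i'.succ = e i'.castSucc := by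
              rw [hUapp]; simp [Fin.val_succ]
            rw [hv1, hUdd]
          have rhs_eq : (∑ k, L i'.castSucc k * L i'.succ k)
              = a i'.castSucc * b i'.succ := by
            rw [sum_single' _ i'.castSucc (fun k hk => by
              have hk1 : (k:ℕ) ≠ (i':ℕ) := fun h => hk (Fin.ext (by simpa using h))
              by_cases hk0 : (i':ℕ) = (k:ℕ)+1
              · rw [hLrow i'.succ k (by simp [Fin.val_succ]; omega)
                  (by simp [Fin.val_succ]; omega)]
                ring
              · rw [hLrow i'.castSucc k (by simpa using hk1) (by simpa using hk0)]
                ring)]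
            rw [hb_succ]
          rw [lhs_eq, rhs_eq]
          exact hed i'
        · -- far off-diagonal : both sides vanish
          have lhs_eq : (∑ k, U i k * U j k) = 0 := by
            apply Finset.sum_eq_zero
            intro k _
            by_cases hk0 : (k:ℕ) = (i:ℕ) ∨ (k:ℕ) = (i:ℕ)+1
            · rw [hUshape j k (by omega) (by omega)]
              ring
            · push_neg at hk0
              rw [hUshape i k hk0.1 hk0.2]
              ring
          have rhs_eq : (∑ k, L i k * L j k) = 0 := by
            apply Finset.sum_eq_zero
            intro k _
            by_cases hk0 : (k:ℕ) = (i:ℕ) ∨ (i:ℕ) = (k:ℕ)+1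
            · rw [hLrow j k (by omega) (by omega)]
              ring
            · push_neg at hk0
              rw [hLrow i k hk0.1 hk0.2]
              ring
          rw [lhs_eq, rhs_eq]
    ext i j
    rw [Matrix.mul_apply, Matrix.mul_apply]
    simp only [Matrix.transpose_apply]
    rcases Nat.le_total (i:ℕ) (j:ℕ) with h | h
    · exact key i j h
    · have := key j i h
      calc (∑ k, U i k * U j k) = ∑ k, U j k * U i k := by
            apply Finset.sum_congr rfl; intro k _; ring
        _ = ∑ k, L j k * L i k := this
        _ = ∑ k, L i k * L j k := by
            apply Finset.sum_congr rfl; intro k _; ring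
  -- properties of U
  have hUbd : IsUpperBidiag U := by
    intro i j h1 h2
    exact hUshape i j (Ne.symm h1) h2
  have hUpos : EntrywiseNonneg U := by
    intro i j
    rw [hUapp]
    split_ifs
    · exact (hdpos i).le
    · exact he0 i
    · exact le_refl 0
  have hUtri : ∀ (i j : Fin (m+1)), j < i → U i j = 0 := by
    intro i j hij
    have h : (j:ℕ) < (i:ℕ) := hij
    exact hUshape i j (by omega) (by omega)
  have hdetU : U.det = ∏ i, U i i :=
    det_of_upperTriangular (fun i j hij => hUtri i j hij)
  have hUdet : IsUnit U.det := by
    rw [hdetU]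
    refine isUnit_iff_ne_zero.mpr (Finset.prod_ne_zero_iff.mpr ?_)
    intro i _
    rw [hUdd]
    exact (hdpos i).ne'
  have hUunit : IsUnit U := (Matrix.isUnit_iff_isUnit_det U).mpr hUdet
  -- the orthogonal matrix
  refine ⟨L⁻¹ * U, U, ?_, hUbd, hUpos, hUunit, ?_, ?_⟩
  · -- orthogonality
    have hLT : IsUnit Lᵀ.det := by rwa [Matrix.det_transpose]
    have hUT : IsUnit Uᵀ.det := by rwa [Matrix.det_transpose]
    have hinv : (Lᵀ)⁻¹ * L⁻¹ = (Uᵀ)⁻¹ * U⁻¹ := by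
      rw [← Matrix.mul_inv_rev, ← Matrix.mul_inv_rev, hmain]
    calc (L⁻¹ * U)ᵀ * (L⁻¹ * U)
        = Uᵀ * ((L⁻¹)ᵀ * L⁻¹ * U) := by
          rw [Matrix.transpose_mul]
          noncomm_ring
      _ = Uᵀ * ((Lᵀ)⁻¹ * L⁻¹ * U) := by rw [Matrix.transpose_nonsing_inv]
      _ = Uᵀ * ((Uᵀ)⁻¹ * U⁻¹ * U) := by rw [hinv]
      _ = (Uᵀ * (Uᵀ)⁻¹) * (U⁻¹ * U) := by noncomm_ring
      _ = 1 := by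
          rw [Matrix.mul_nonsing_inv _ hUT, Matrix.nonsing_inv_mul _ hUdet, one_mul]
  · rw [← Matrix.mul_assoc, Matrix.mul_nonsing_inv _ hLdet, Matrix.one_mul]
  · rw [Matrix.mul_assoc, Matrix.mul_nonsing_inv _ hUdet, Matrix.mul_one]
end

section
/- Let A be an n×m matrix admitting a bidiagonal factorization A = L_{n-1} ⋯ L_1 D U_1 ⋯ U_{m-1}, where D is the n×m diagonal matrix with diagonal entries g_{11},…,g_{min(n,m),min(n,m)}, each L_k is a lower bidiagonal n×n matrix, and each U_l is an upper bidiagonal m×m matrix, with parameters {ḡ_{ij}, g_{ij}} as in the standard representation. If for some 2 ≤ k ≤ n the parameter ḡ_{k1} = 0 (the diagonal entry of the appropriate factor L in its (k-1,k-1) position, passed down through the product), then row k-1 of A is the zero row. -/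
open Matrix

/-- The lower bidiagonal factor `L_k` of the representation `BD(A)` (1-based indexing):
`L_k = bilow({ḡ_{i+1,i+1-k}, g_{i+1,i+1-k}}_{i=k}^{min(n-1, m+k-1)})`. -/
def Lfac (n m : ℕ) (gbar g : ℕ → ℕ → ℝ) (k : ℕ) : Matrix (Fin n) (Fin n) ℝ :=
  Matrix.of fun i j =>
    if (i : ℕ) = (j : ℕ) then
      (if k ≤ (j : ℕ) + 1 ∧ (j : ℕ) + 1 ≤ min (n - 1) (m + k - 1) then
        gbar ((j : ℕ) + 2) ((j : ℕ) + 2 - k) else 1)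
    else if (i : ℕ) = (j : ℕ) + 1 then
      (if k ≤ (j : ℕ) + 1 ∧ (j : ℕ) + 1 ≤ min (n - 1) (m + k - 1) then
        g ((j : ℕ) + 2) ((j : ℕ) + 2 - k) else 0)
    else 0

/-- The upper bidiagonal factor `U_l` of the representation `BD(A)` (1-based indexing):
`U_l = biupp({ḡ_{i+1-l,i+1}, g_{i+1-l,i+1}}_{i=l}^{min(m-1, n+l-1)})`. -/
def Ufac (n m : ℕ) (gbar g : ℕ → ℕ → ℝ) (l : ℕ) : Matrix (Fin m) (Fin m) ℝ :=
  Matrix.of fun i j =>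
    if (i : ℕ) = (j : ℕ) then
      (if l ≤ (i : ℕ) + 1 ∧ (i : ℕ) + 1 ≤ min (m - 1) (n + l - 1) then
        gbar ((i : ℕ) + 2 - l) ((i : ℕ) + 2) else 1)
    else if (j : ℕ) = (i : ℕ) + 1 then
      (if l ≤ (i : ℕ) + 1 ∧ (i : ℕ) + 1 ≤ min (m - 1) (n + l - 1) then
        g ((i : ℕ) + 2 - l) ((i : ℕ) + 2) else 0)
    else 0

/-- The diagonal factor `D = diag(g_{11}, …, g_{min(n,m),min(n,m)})`. -/
def Dfac (n m : ℕ) (g : ℕ → ℕ → ℝ) : Matrix (Fin n) (Fin m) ℝ :=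
  Matrix.of fun i j => if (i : ℕ) = (j : ℕ) then g ((i : ℕ) + 1) ((i : ℕ) + 1) else 0

/-- The matrix generated by the representation `BD(A) = ({ḡ_{ij}, g_{ij}})`:
`A = L_{n-1} ⋯ L_1 · D · U_1 ⋯ U_{m-1}`. -/
def BDmatrix (n m : ℕ) (gbar g : ℕ → ℕ → ℝ) : Matrix (Fin n) (Fin m) ℝ :=
  ((List.range (n - 1)).map (fun t => Lfac n m gbar g (n - 1 - t))).prod *
    Dfac n m g *
    ((List.range (m - 1)).map (fun t => Ufac n m gbar g (t + 1))).prod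

lemma rowZero_mul {n p q : ℕ} (M : Matrix (Fin n) (Fin p) ℝ) (N : Matrix (Fin p) (Fin q) ℝ)
    (r : Fin n) (h : ∀ j, M r j = 0) : ∀ j, (M * N) r j = 0 := by
  intro j
  rw [Matrix.mul_apply]
  exact Finset.sum_eq_zero fun x _ => by rw [h x, zero_mul]

lemma supp_mul_rowZero {n q : ℕ} (M : Matrix (Fin n) (Fin n) ℝ) (N : Matrix (Fin n) (Fin q) ℝ)
    (r : Fin n) (hM : ∀ j, j ≠ r → M r j = 0) (hN : ∀ j, N r j = 0) :
    ∀ j, (M * N) r j = 0 := by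
  intro j
  rw [Matrix.mul_apply]
  refine Finset.sum_eq_zero fun x _ => ?_
  by_cases hx : x = r
  · rw [hx, hN, mul_zero]
  · rw [hM x hx, zero_mul]

lemma prod_row_zero {n : ℕ} (r : Fin n) (l₁ l₂ : List (Matrix (Fin n) (Fin n) ℝ))
    (M : Matrix (Fin n) (Fin n) ℝ)
    (h1 : ∀ N ∈ l₁, ∀ j, j ≠ r → N r j = 0) (hM : ∀ j, M r j = 0) :
    ∀ j, (l₁ ++ M :: l₂).prod r j = 0 := by
  induction l₁ with
  | nil =>
    intro j
    simp only [List.nil_append, List.prod_cons]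
    exact rowZero_mul M l₂.prod r hM j
  | cons N l₁ ih =>
    intro j
    simp only [List.cons_append, List.prod_cons]
    exact supp_mul_rowZero N _ r (h1 N (by simp)) (ih (fun P hP => h1 P (by simp [hP]))) j

lemma Lrow_supp {n m k κ : ℕ} (gbar g : ℕ → ℕ → ℝ) (h2 : 2 ≤ k) (hk : k ≤ n)
    (hκ : k ≤ κ) : ∀ j, j ≠ (⟨k - 2, by omega⟩ : Fin n) →
      Lfac n m gbar g κ (⟨k - 2, by omega⟩ : Fin n) j = 0 := by
  intro j hj
  have hjne : (j : ℕ) ≠ k - 2 := fun h => hj (Fin.ext h)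
  show (if (k - 2 : ℕ) = (j : ℕ) then _ else if (k - 2 : ℕ) = (j : ℕ) + 1 then _ else (0:ℝ)) = 0
  split_ifs with ha hb hc hd
  · omega
  · omega
  · exact absurd hd.1 (by omega)
  · rfl
  · rfl

lemma Lrow_zero {n m k : ℕ} (gbar g : ℕ → ℕ → ℝ) (h2 : 2 ≤ k) (hk : k ≤ n) (hm : 1 ≤ m)
    (h0 : gbar k 1 = 0) :
    ∀ j, Lfac n m gbar g (k - 1) (⟨k - 2, by omega⟩ : Fin n) j = 0 := by
  intro j
  show (if (k - 2 : ℕ) = (j : ℕ) then _ else if (k - 2 : ℕ) = (j : ℕ) + 1 then _ else (0:ℝ)) = 0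
  split_ifs with ha hb hc hd
  · have hj : (j : ℕ) = k - 2 := ha.symm
    rw [hj, show k - 2 + 2 = k from by omega, show k - (k - 1) = 1 from by omega]
    exact h0
  · exact absurd (⟨by omega, by omega⟩ : k - 1 ≤ (j:ℕ) + 1 ∧ (j:ℕ) + 1 ≤ min (n-1) (m + (k-1) - 1)) hb
  · exact absurd hd.1 (by omega)
  · rfl
  · rfl

/-- if the parameter `ḡ_{k1}` of the representation vanishes
(for some `2 ≤ k ≤ n`), then row `k-1` (1-based) of `A` is the zero row. -/
theorem stmt11 (n m : ℕ) (gbar g : ℕ → ℕ → ℝ) (k : ℕ)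
    (h2 : 2 ≤ k) (hk : k ≤ n) (h0 : gbar k 1 = 0) :
    ∀ j, BDmatrix n m gbar g ⟨k - 2, by omega⟩ j = 0 := by
  intro j
  rcases Nat.eq_zero_or_pos m with hm | hm
  · exact absurd j.2 (by omega)
  set r : Fin n := ⟨k - 2, by omega⟩ with hr
  have hsplit : List.range (n - 1) =
      List.range' 0 (n - k) ++ (n - k) :: List.range' (n - k + 1) (k - 2) := by
    rw [List.range_eq_range', show n - 1 = (n - k) + (k - 1) from by omega,
      ← List.range'_append_1 (s := 0) (m := n - k) (n := k - 1)]
    congr 1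
    rw [show k - 1 = (k - 2) + 1 from by omega, List.range'_succ]
    simp
  have hL : ∀ j', ((List.range (n - 1)).map (fun t => Lfac n m gbar g (n - 1 - t))).prod r j' = 0 := by
    rw [hsplit]
    simp only [List.map_append, List.map_cons]
    apply prod_row_zero
    · intro N hN j' hj'
      rcases List.mem_map.1 hN with ⟨t, ht, rfl⟩
      have ht' : t < n - k := by
        have := List.mem_range'_1.1 ht
        omega
      exact Lrow_supp gbar g h2 hk (by omega) j' hj'
    · rw [show n - 1 - (n - k) = k - 1 from by omega]
      exact Lrow_zero gbar g h2 hk hm h0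
  have hLD : ∀ j', (((List.range (n - 1)).map (fun t => Lfac n m gbar g (n - 1 - t))).prod *
      Dfac n m g) r j' = 0 := rowZero_mul _ _ r hL
  exact rowZero_mul _ _ r hLD j
end

section
/- Let L = bilow({x̄_i, -x_i}_{i=k}^{n}) ∈ ℝ^{n×n} with x̄_i ≥ 0 and x_i ≥ 0 for all i. Define recursively z_n = x̄_n, and for i = n, n-1, …, k+1: ȳ_i = √(z_i² + x_{i-1}²), c_i = z_i/ȳ_i, s_i = x_{i-1}/ȳ_i, y_{i-1} = s_i x̄_{i-1}, z_{i-1} = c_i x̄_{i-1}, and ȳ_k = z_k. Let G_i be the Givens rotation equal to the identity except that its 2×2 principal submatrix in rows and columns {i-1, i} is [[c_i, -s_i],[s_i, c_i]]. Then L·G_n·G_{n-1}⋯G_{k+1} = biupp({ȳ_i, -y_i}_{i=k}^{n}), an upper bidiagonal matrix, and all c_i, s_i, ȳ_i, y_i are nonnegative. -/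
open Matrix

/-- Partial result after `t` Givens rotations have been applied. -/
def stmt12Mb (n k : ℕ) (xbar x z ybar y : ℕ → ℝ) (t : ℕ) : Matrix (Fin n) (Fin n) ℝ :=
  Matrix.of fun a b : Fin n =>
    if (a : ℕ) = (b : ℕ) then
      (if (a : ℕ) + 1 < k then 1
       else if (a : ℕ) + 1 < n - t then xbar ((a : ℕ) + 1)
       else if (a : ℕ) + 1 = n - t then z ((a : ℕ) + 1)
       else ybar ((a : ℕ) + 1))
    else if (a : ℕ) = (b : ℕ) + 1 then
      (if k ≤ (b : ℕ) + 1 ∧ (b : ℕ) + 1 + 1 ≤ n - t then -(x ((b : ℕ) + 1)) else 0)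
    else if (b : ℕ) = (a : ℕ) + 1 then
      (if n - t ≤ (a : ℕ) + 1 then -(y ((a : ℕ) + 1)) else 0)
    else 0

/-- The Givens rotation `G_i` acting on (1-based) coordinates `i-1, i`. -/
def stmt12Gr (n : ℕ) (c s : ℕ → ℝ) (i : ℕ) : Matrix (Fin n) (Fin n) ℝ :=
  Matrix.of fun a b : Fin n =>
    if (a : ℕ) + 1 = i - 1 ∧ (b : ℕ) + 1 = i - 1 then c i
    else if (a : ℕ) + 1 = i - 1 ∧ (b : ℕ) + 1 = i then -(s i)
    else if (a : ℕ) + 1 = i ∧ (b : ℕ) + 1 = i - 1 then s i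
    else if (a : ℕ) + 1 = i ∧ (b : ℕ) + 1 = i then c i
    else if (a : ℕ) = (b : ℕ) then 1
    else 0

set_option maxHeartbeats 2000000 in
lemma stmt12step (n k : ℕ) (xbar x z ybar c s y : ℕ → ℝ) (j : ℕ)
    (hk1 : 1 ≤ k) (hj1 : k + 1 ≤ j) (hjn : j ≤ n)
    (hyb : ybar j = Real.sqrt ((z j) ^ 2 + (x (j - 1)) ^ 2))
    (hcj : c j = z j / ybar j) (hsj : s j = x (j - 1) / ybar j)
    (hyj : y (j - 1) = s j * xbar (j - 1)) (hzj : z (j - 1) = c j * xbar (j - 1)) :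
    stmt12Mb n k xbar x z ybar y (n - j) * stmt12Gr n c s j
      = stmt12Mb n k xbar x z ybar y (n - j + 1) := by
  have hj0 : 2 ≤ j := by omega
  have hsq : ybar j ^ 2 = z j ^ 2 + x (j - 1) ^ 2 := by
    rw [hyb]; exact Real.sq_sqrt (by positivity)
  have fact2 : -(x (j - 1)) * c j + z j * s j = 0 := by rw [hcj, hsj]; ring
  have fact3 : x (j - 1) * s j + z j * c j = ybar j := by
    rcases eq_or_ne (ybar j) 0 with h0 | h0
    · rw [hcj, hsj, h0]; simp
    · rw [hcj, hsj]; field_simp; linarith [hsq]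
  have hp : j - 2 < n := by omega
  have hq : j - 1 < n := by omega
  set t : ℕ := n - j with htdef
  have htj : n - t = j := by omega
  have ht1 : n - (t + 1) = j - 1 := by omega
  set P : Fin n := ⟨j - 2, hp⟩ with hPdef
  set Q : Fin n := ⟨j - 1, hq⟩ with hQdef
  have hPv : (P : ℕ) = j - 2 := rfl
  have hQv : (Q : ℕ) = j - 1 := rfl
  have e1 : j - 2 + 1 = j - 1 := by omega
  have e2 : j - 1 + 1 = j := by omega
  ext a b
  rw [Matrix.mul_apply]
  by_cases hb1 : (b : ℕ) + 1 = j - 1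
  · -- column j-1
    have hcol : ∀ cc : Fin n, stmt12Gr n c s j cc b =
        (if cc = P then c j else 0) + (if cc = Q then s j else 0) := by
      intro cc
      simp only [stmt12Gr, Matrix.of_apply, Fin.ext_iff, hPv, hQv]
      split_ifs <;> first | (exfalso; omega) | (simp; done)
    have hsum : (∑ cc, stmt12Mb n k xbar x z ybar y t a cc * stmt12Gr n c s j cc b)
        = stmt12Mb n k xbar x z ybar y t a P * c j
          + stmt12Mb n k xbar x z ybar y t a Q * s j := by
      simp [hcol, mul_add, mul_ite, mul_zero, Finset.sum_add_distrib]
    rw [hsum]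
    have hb' : (b : ℕ) = j - 2 := by omega
    simp only [stmt12Mb, Matrix.of_apply, hPv, hQv, htj, ht1, hb']
    by_cases ha1 : (a : ℕ) = j - 2
    · rw [ha1, e1]
      split_ifs <;>
        first
          | (exfalso; omega) | ring1 | (rw [hzj]; ring1) | (rw [hyj]; ring1)
          | linear_combination fact2 | linear_combination fact3
    · by_cases ha2 : (a : ℕ) = j - 1
      · rw [ha2, e2, e1]
        split_ifs <;>
          first
            | (exfalso; omega) | ring1 | (rw [hzj]; ring1) | (rw [hyj]; ring1)
            | linear_combination fact2 | linear_combination fact3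
      · split_ifs <;> first | (exfalso; omega) | ring1
  · by_cases hb2 : (b : ℕ) + 1 = j
    · -- column j
      have hcol : ∀ cc : Fin n, stmt12Gr n c s j cc b =
          (if cc = P then -(s j) else 0) + (if cc = Q then c j else 0) := by
        intro cc
        simp only [stmt12Gr, Matrix.of_apply, Fin.ext_iff, hPv, hQv]
        split_ifs <;> first | (exfalso; omega) | (simp; done)
      have hsum : (∑ cc, stmt12Mb n k xbar x z ybar y t a cc * stmt12Gr n c s j cc b)
          = stmt12Mb n k xbar x z ybar y t a P * (-(s j))
            + stmt12Mb n k xbar x z ybar y t a Q * c j := by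
        simp [hcol, mul_add, mul_ite, mul_zero, Finset.sum_add_distrib]
      rw [hsum]
      have hb' : (b : ℕ) = j - 1 := by omega
      simp only [stmt12Mb, Matrix.of_apply, hPv, hQv, htj, ht1, hb']
      by_cases ha1 : (a : ℕ) = j - 2
      · rw [ha1, e1]
        split_ifs <;>
          first
            | (exfalso; omega) | ring1 | (rw [hzj]; ring1) | (rw [hyj]; ring1)
            | linear_combination fact2 | linear_combination fact3
      · by_cases ha2 : (a : ℕ) = j - 1
        · rw [ha2, e2, e1]
          split_ifs <;>
            first
              | (exfalso; omega) | ring1 | (rw [hzj]; ring1) | (rw [hyj]; ring1)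
              | linear_combination fact2 | linear_combination fact3
        · split_ifs <;> first | (exfalso; omega) | ring1
    · -- other columns: G acts as identity
      have hcol : ∀ cc : Fin n, stmt12Gr n c s j cc b = if cc = b then 1 else 0 := by
        intro cc
        simp only [stmt12Gr, Matrix.of_apply, Fin.ext_iff]
        split_ifs <;> first | (exfalso; omega) | (simp; done)
      have hsum : (∑ cc, stmt12Mb n k xbar x z ybar y t a cc * stmt12Gr n c s j cc b)
          = stmt12Mb n k xbar x z ybar y t a b := by
        simp [hcol, mul_ite, mul_zero, mul_one]
      rw [hsum]
      simp only [stmt12Mb, Matrix.of_apply, htj, ht1]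
      split_ifs <;> first | rfl | (exfalso; omega)

lemma stmt12main (n k : ℕ) (hk1 : 1 ≤ k) (hkn : k ≤ n)
    (xbar x : ℕ → ℝ)
    (z ybar c s y : ℕ → ℝ)
    (hybar : ∀ i, k + 1 ≤ i → i ≤ n → ybar i = Real.sqrt ((z i) ^ 2 + (x (i - 1)) ^ 2))
    (hc : ∀ i, k + 1 ≤ i → i ≤ n → c i = z i / ybar i)
    (hs : ∀ i, k + 1 ≤ i → i ≤ n → s i = x (i - 1) / ybar i)
    (hy : ∀ i, k + 1 ≤ i → i ≤ n → y (i - 1) = s i * xbar (i - 1))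
    (hz : ∀ i, k + 1 ≤ i → i ≤ n → z (i - 1) = c i * xbar (i - 1)) :
    ∀ t, t ≤ n - k →
      stmt12Mb n k xbar x z ybar y 0 *
        ((List.range t).map (fun u => stmt12Gr n c s (n - u))).prod
      = stmt12Mb n k xbar x z ybar y t := by
  intro t
  induction t with
  | zero => intro _; simp
  | succ t ih =>
    intro ht
    rw [List.range_succ, List.map_append, List.prod_append, List.map_singleton,
      List.prod_singleton, ← Matrix.mul_assoc, ih (by omega)]
    have hstep := stmt12step n k xbar x z ybar c s y (n - t) hk1 (by omega) (by omega)
      (hybar _ (by omega) (by omega)) (hc _ (by omega) (by omega))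
      (hs _ (by omega) (by omega)) (hy _ (by omega) (by omega)) (hz _ (by omega) (by omega))
    rw [show n - (n - t) = t from by omega] at hstep
    exact hstep

/-- the lower bidiagonal matrix `L = bilow({x̄_i, -x_i}_{i=k}^{n})` with
nonnegative data is reduced to the upper bidiagonal `biupp({ȳ_i, -y_i}_{i=k}^{n})` by
right multiplication with the Givens rotations `G_n G_{n-1} ⋯ G_{k+1}` built from the
recursively defined quantities `z, ȳ, c, s, y`; all `c_i, s_i, ȳ_i, y_i` are nonnegative.
All indexing is 1-based. -/
theorem stmt12 (n k : ℕ) (hk1 : 1 ≤ k) (hkn : k ≤ n)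
    (xbar x : ℕ → ℝ) (hxbar : ∀ i, 0 ≤ xbar i) (hx : ∀ i, 0 ≤ x i)
    (z ybar c s y : ℕ → ℝ)
    (hzn : z n = xbar n)
    (hybar : ∀ i, k + 1 ≤ i → i ≤ n → ybar i = Real.sqrt ((z i) ^ 2 + (x (i - 1)) ^ 2))
    (hc : ∀ i, k + 1 ≤ i → i ≤ n → c i = z i / ybar i)
    (hs : ∀ i, k + 1 ≤ i → i ≤ n → s i = x (i - 1) / ybar i)
    (hy : ∀ i, k + 1 ≤ i → i ≤ n → y (i - 1) = s i * xbar (i - 1))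
    (hz : ∀ i, k + 1 ≤ i → i ≤ n → z (i - 1) = c i * xbar (i - 1))
    (hybark : ybar k = z k) :
    -- `L * G_n * G_{n-1} * ⋯ * G_{k+1} = biupp({ȳ_i, -y_i}_{i=k}^{n})`
    ((Matrix.of fun a b : Fin n =>
        if (a : ℕ) = (b : ℕ) then
          (if k ≤ (a : ℕ) + 1 ∧ (a : ℕ) + 1 ≤ n then xbar ((a : ℕ) + 1) else 1)
        else if (a : ℕ) = (b : ℕ) + 1 then
          (if k ≤ (b : ℕ) + 1 ∧ (b : ℕ) + 1 ≤ n - 1 then -(x ((b : ℕ) + 1)) else 0)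
        else 0) *
      ((List.range (n - k)).map (fun t =>
        (Matrix.of fun a b : Fin n =>
          if (a : ℕ) + 1 = (n - t) - 1 ∧ (b : ℕ) + 1 = (n - t) - 1 then c (n - t)
          else if (a : ℕ) + 1 = (n - t) - 1 ∧ (b : ℕ) + 1 = n - t then -(s (n - t))
          else if (a : ℕ) + 1 = n - t ∧ (b : ℕ) + 1 = (n - t) - 1 then s (n - t)
          else if (a : ℕ) + 1 = n - t ∧ (b : ℕ) + 1 = n - t then c (n - t)
          else if (a : ℕ) = (b : ℕ) then 1
          else 0 : Matrix (Fin n) (Fin n) ℝ))).prod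
      = (Matrix.of fun a b : Fin n =>
          if (a : ℕ) = (b : ℕ) then
            (if k ≤ (a : ℕ) + 1 ∧ (a : ℕ) + 1 ≤ n then ybar ((a : ℕ) + 1) else 1)
          else if (b : ℕ) = (a : ℕ) + 1 then
            (if k ≤ (a : ℕ) + 1 ∧ (a : ℕ) + 1 ≤ n - 1 then -(y ((a : ℕ) + 1)) else 0)
          else 0)) ∧
    (∀ i, k + 1 ≤ i → i ≤ n → 0 ≤ c i ∧ 0 ≤ s i) ∧
    (∀ i, k ≤ i → i ≤ n → 0 ≤ ybar i) ∧
    (∀ i, k ≤ i → i ≤ n - 1 → 0 ≤ y i) := by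
  have hznn : ∀ i, k ≤ i → i ≤ n → 0 ≤ z i := by
    have key : ∀ d i, i ≤ n → n - i = d → k ≤ i → 0 ≤ z i := by
      intro d
      induction d with
      | zero =>
        intro i hin hd _
        have hi : i = n := by omega
        rw [hi, hzn]; exact hxbar n
      | succ d ihd =>
        intro i hin hd hki
        have h1 : i + 1 ≤ n := by omega
        have h2 : k + 1 ≤ i + 1 := by omega
        have hz' := hz (i + 1) h2 h1
        simp only [Nat.add_sub_cancel] at hz'
        rw [hz', hc (i + 1) h2 h1]
        have hzi1 : 0 ≤ z (i + 1) := ihd (i + 1) h1 (by omega) (by omega)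
        have hyb1 : 0 ≤ ybar (i + 1) := by
          rw [hybar (i + 1) h2 h1]; exact Real.sqrt_nonneg _
        exact mul_nonneg (div_nonneg hzi1 hyb1) (hxbar i)
    intro i h1 h2; exact key (n - i) i h2 rfl h1
  have hybnn : ∀ i, k ≤ i → i ≤ n → 0 ≤ ybar i := by
    intro i h1 h2
    rcases eq_or_lt_of_le h1 with h | h
    · rw [← h, hybark]; exact hznn k le_rfl (by omega)
    · rw [hybar i (by omega) h2]; exact Real.sqrt_nonneg _
  have hcsnn : ∀ i, k + 1 ≤ i → i ≤ n → 0 ≤ c i ∧ 0 ≤ s i := by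
    intro i h1 h2
    constructor
    · rw [hc i h1 h2]
      exact div_nonneg (hznn i (by omega) h2) (hybnn i (by omega) h2)
    · rw [hs i h1 h2]
      exact div_nonneg (hx _) (hybnn i (by omega) h2)
  have hynn : ∀ i, k ≤ i → i ≤ n - 1 → 0 ≤ y i := by
    intro i h1 h2
    have h3 : i + 1 ≤ n := by omega
    have hy' := hy (i + 1) (by omega) h3
    simp only [Nat.add_sub_cancel] at hy'
    rw [hy']
    exact mul_nonneg (hcsnn (i + 1) (by omega) h3).2 (hxbar i)
  refine ⟨?_, hcsnn, hybnn, hynn⟩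
  have hL : (Matrix.of fun a b : Fin n =>
        if (a : ℕ) = (b : ℕ) then
          (if k ≤ (a : ℕ) + 1 ∧ (a : ℕ) + 1 ≤ n then xbar ((a : ℕ) + 1) else 1)
        else if (a : ℕ) = (b : ℕ) + 1 then
          (if k ≤ (b : ℕ) + 1 ∧ (b : ℕ) + 1 ≤ n - 1 then -(x ((b : ℕ) + 1)) else 0)
        else 0) = stmt12Mb n k xbar x z ybar y 0 := by
    ext a b
    have ha' : (a : ℕ) < n := a.isLt
    have hb' : (b : ℕ) < n := b.isLt
    simp only [stmt12Mb, Matrix.of_apply, Nat.sub_zero]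
    split_ifs <;>
      first
        | rfl
        | (exfalso; omega)
        | (rw [show (a : ℕ) + 1 = n from by omega, hzn])
  have hU : stmt12Mb n k xbar x z ybar y (n - k) = (Matrix.of fun a b : Fin n =>
          if (a : ℕ) = (b : ℕ) then
            (if k ≤ (a : ℕ) + 1 ∧ (a : ℕ) + 1 ≤ n then ybar ((a : ℕ) + 1) else 1)
          else if (b : ℕ) = (a : ℕ) + 1 then
            (if k ≤ (a : ℕ) + 1 ∧ (a : ℕ) + 1 ≤ n - 1 then -(y ((a : ℕ) + 1)) else 0)
          else 0) := by
    ext a b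
    have ha' : (a : ℕ) < n := a.isLt
    have hb' : (b : ℕ) < n := b.isLt
    have hnk : n - (n - k) = k := by omega
    simp only [stmt12Mb, Matrix.of_apply, hnk]
    split_ifs <;>
      first
        | rfl
        | (exfalso; omega)
        | (rw [show (a : ℕ) + 1 = k from by omega, hybark])
  have hmain := stmt12main n k hk1 hkn xbar x z ybar c s y hybar hc hs hy hz (n - k) le_rfl
  rw [hL]
  exact hmain.trans hU
end

section
/- Let A ∈ ℝ^{n×m} be a matrix whose rows satisfy: rows i_k, i_k+1, …, i_{k+1}-1 are all equal for each k = 1,…,n_1 (with 1 = i_1 < i_2 < ⋯ < i_{n_1} and i_{n_1+1} = n+1), and whose columns analogously coincide on blocks j_k, …, j_{k+1}-1 for k = 1,…,m_1. Then A = R · A[i_1,…,i_{n_1} | j_1,…,j_{m_1}] · C, where R ∈ ℝ^{n×n_1} is a product of elementary bidiagonal matrices E_t(1,1) and E_t(0,1) together with the rectangular identity I_{n,n_1}, and C ∈ ℝ^{m_1×m} is a transpose-analogous product; here E_i(x,y) is the identity with its (i,i) entry replaced by x and its (i+1,i) entry by y. -/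
open Matrix

/-- The elementary bidiagonal matrix `E_t(x,y)`: the identity with the `(t,t)` entry
replaced by `x` and the `(t+1,t)` entry by `y` (0-based indexing of positions). -/
def Emat (n : ℕ) (t : ℕ) (x y : ℝ) : Matrix (Fin n) (Fin n) ℝ :=
  Matrix.of fun a b =>
    if a = b then (if (a : ℕ) = t then x else 1)
    else if (a : ℕ) = t + 1 ∧ (b : ℕ) = t then y
    else 0

/-- The rectangular identity matrix `I_{n,p}`. -/
def rectId (n p : ℕ) : Matrix (Fin n) (Fin p) ℝ :=
  Matrix.of fun i j => if (i : ℕ) = (j : ℕ) then 1 else 0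

section Helpers

variable {n : ℕ} {κ : Type*}

lemma emat_apply (t : ℕ) (x y : ℝ) (a b : Fin n) :
    Emat n t x y a b =
      if a = b then (if (a : ℕ) = t then x else 1)
      else if (a : ℕ) = t + 1 ∧ (b : ℕ) = t then y else 0 := rfl

lemma emat_mul_apply_eq (t : ℕ) (x y : ℝ) (M : Matrix (Fin n) κ ℝ)
    {i : Fin n} (hi : (i : ℕ) = t) (j : κ) :
    (Emat n t x y * M) i j = x * M i j := by
  rw [Matrix.mul_apply]
  rw [Finset.sum_eq_single i]
  · simp [emat_apply, hi]
  · intro k _ hk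
    have h1 : ¬ (i = k) := fun h => hk h.symm
    have h2 : ¬ ((i : ℕ) = t + 1) := by omega
    simp [emat_apply, h1, h2]
  · simp

lemma emat_mul_apply_succ (t : ℕ) (ht : t < n) (x y : ℝ) (M : Matrix (Fin n) κ ℝ)
    {i : Fin n} (hi : (i : ℕ) = t + 1) (j : κ) :
    (Emat n t x y * M) i j = y * M ⟨t, ht⟩ j + M i j := by
  have hne : i ≠ ⟨t, ht⟩ := by
    intro h; apply_fun Fin.val at h; simp at h; omega
  have hit : ¬ ((i : ℕ) = t) := by omega
  rw [Matrix.mul_apply]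
  rw [show (∑ k, Emat n t x y i k * M k j)
      = ∑ k, ((if k = ⟨t, ht⟩ then y * M k j else 0) + (if k = i then M k j else 0)) by
    apply Finset.sum_congr rfl
    intro k _
    by_cases hk1 : k = (⟨t, ht⟩ : Fin n)
    · subst hk1
      simp [emat_apply, hne, Ne.symm hne, hi]
    · have hkt : ¬ ((k : ℕ) = t) := by
        intro h; exact hk1 (Fin.ext h)
      by_cases hk2 : k = i
      · subst hk2
        simp [emat_apply, hit, hk1]
      · have : ¬ (i = k) := fun h => hk2 h.symm
        simp [emat_apply, this, hkt, hk1, hk2]]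
  rw [Finset.sum_add_distrib, Finset.sum_ite_eq', Finset.sum_ite_eq']
  simp

lemma emat_mul_apply_other (t : ℕ) (x y : ℝ) (M : Matrix (Fin n) κ ℝ)
    {i : Fin n} (h1 : (i : ℕ) ≠ t) (h2 : (i : ℕ) ≠ t + 1) (j : κ) :
    (Emat n t x y * M) i j = M i j := by
  rw [Matrix.mul_apply]
  rw [Finset.sum_eq_single i]
  · simp [emat_apply, h1]
  · intro k _ hk
    have hik : ¬ (i = k) := fun h => hk h.symm
    simp [emat_apply, hik, h2]
  · simp

lemma strictMono_le_val {n1 : ℕ} (rep : Fin n1 → Fin n) (hmono : StrictMono rep)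
    (p : Fin n1) : (p : ℕ) ≤ (rep p : ℕ) := by
  suffices h : ∀ (k : ℕ) (p : Fin n1), (p : ℕ) = k → k ≤ (rep p : ℕ) from h _ p rfl
  intro k
  induction k with
  | zero => omega
  | succ k ih =>
    intro p hp
    have hk : k < n1 := by omega
    have h1 := ih ⟨k, hk⟩ rfl
    have h2 : (rep ⟨k, hk⟩ : ℕ) < (rep p : ℕ) :=
      Fin.lt_def.mp (hmono (Fin.lt_def.mpr (show k < (p : ℕ) by omega)))
    omega

/-- Shift phase: a product of `E_t(0,1)` matrices turns `rectId n n1` into the matrix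
whose `(i,p)` entry is `1` iff `i = rep p`. -/
lemma shift_phase {n1 : ℕ} (rep : Fin n1 → Fin n) (hmono : StrictMono rep) :
    ∃ l₂ : List (Matrix (Fin n) (Fin n) ℝ),
      (∀ M ∈ l₂, ∃ t, M = Emat n t 0 1) ∧
      l₂.prod * rectId n n1
        = Matrix.of fun (i : Fin n) (p : Fin n1) =>
            if (i : ℕ) = (rep p : ℕ) then (1 : ℝ) else 0 := by
  have hreple := strictMono_le_val rep hmono
  set Qm : ℕ → Matrix (Fin n) (Fin n1) ℝ := fun q =>
    Matrix.of fun (i : Fin n) (p : Fin n1) =>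
      if q ≤ (p : ℕ) then (if (i : ℕ) = (rep p : ℕ) then (1:ℝ) else 0)
      else (if (i : ℕ) = (p : ℕ) then 1 else 0) with hQm
  suffices h : ∀ d, d ≤ n1 → ∃ l : List (Matrix (Fin n) (Fin n) ℝ),
      (∀ M ∈ l, ∃ t, M = Emat n t 0 1) ∧ l.prod * rectId n n1 = Qm (n1 - d) by
    obtain ⟨l, hl, hprod⟩ := h n1 le_rfl
    refine ⟨l, hl, ?_⟩
    rw [hprod]
    ext i p
    have hp1 := p.isLt
    simp only [hQm, of_apply]
    split_ifs <;> first | rfl | (exfalso; omega)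
  intro d
  induction d with
  | zero =>
    intro _
    refine ⟨[], by simp, ?_⟩
    rw [List.prod_nil, Matrix.one_mul]
    ext i p
    have hp1 := p.isLt
    simp only [rectId, hQm, of_apply]
    split_ifs <;> first | rfl | (exfalso; omega)
  | succ d ih =>
    intro hd
    obtain ⟨l, hl, hprod⟩ := ih (by omega)
    have hqn : n1 - (d+1) < n1 := by omega
    set q := n1 - (d+1) with hq
    have hsub : n1 - d = q + 1 := by omega
    rw [hsub] at hprod
    set qf : Fin n1 := ⟨q, hqn⟩ with hqf
    have hqfv : (qf : ℕ) = q := rfl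
    set Q' : ℕ → Matrix (Fin n) (Fin n1) ℝ := fun r =>
      Matrix.of fun (i : Fin n) (p : Fin n1) =>
        if q < (p : ℕ) then (if (i : ℕ) = (rep p : ℕ) then (1:ℝ) else 0)
        else if (p : ℕ) = q then (if (i : ℕ) = r then 1 else 0)
        else (if (i : ℕ) = (p : ℕ) then 1 else 0) with hQ'
    have hbase : Qm (q+1) = Q' q := by
      ext i p
      simp only [hQm, hQ', of_apply]
      by_cases hpq : (p : ℕ) = q
      · have : p = qf := Fin.ext hpq
        subst this
        split_ifs <;> first | rfl | (exfalso; omega)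
      · split_ifs <;> first | rfl | (exfalso; omega)
    have hstep : ∀ r, q ≤ r → r < (rep qf : ℕ) → Emat n r 0 1 * Q' r = Q' (r+1) := by
      intro r hqr hr
      have hrn : r < n := lt_trans hr (rep qf).isLt
      ext i p
      have hp1 := p.isLt
      have hrep1 : (p : ℕ) = q → (rep p : ℕ) = (rep qf : ℕ) := by
        intro h
        have : p = qf := Fin.ext h
        rw [this]
      have hrep2 : q < (p : ℕ) → (rep qf : ℕ) < (rep p : ℕ) := fun h =>
        Fin.lt_def.mp (hmono (Fin.lt_def.mpr (show q < (p : ℕ) from h)))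
      by_cases hc1 : (p : ℕ) = q
      · have hr1 := hrep1 hc1
        by_cases h1 : (i : ℕ) = r
        · rw [emat_mul_apply_eq r 0 1 _ h1, zero_mul]
          simp only [hQ', of_apply]
          split_ifs <;> first | rfl | (exfalso; omega)
        · by_cases h2 : (i : ℕ) = r + 1
          · rw [emat_mul_apply_succ r hrn 0 1 _ h2]
            simp only [hQ', of_apply, show ((⟨r, hrn⟩ : Fin n) : ℕ) = r from rfl]
            split_ifs <;> first | (exfalso; omega) | norm_num
          · rw [emat_mul_apply_other r 0 1 _ h1 h2]
            simp only [hQ', of_apply]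
            split_ifs <;> first | rfl | (exfalso; omega)
      · have hr2 : q < (p : ℕ) → (rep qf : ℕ) < (rep p : ℕ) := hrep2
        rcases Nat.lt_or_ge q (p : ℕ) with hc2 | hc2
        · have hr3 := hr2 hc2
          by_cases h1 : (i : ℕ) = r
          · rw [emat_mul_apply_eq r 0 1 _ h1, zero_mul]
            simp only [hQ', of_apply]
            split_ifs <;> first | rfl | (exfalso; omega)
          · by_cases h2 : (i : ℕ) = r + 1
            · rw [emat_mul_apply_succ r hrn 0 1 _ h2]
              simp only [hQ', of_apply, show ((⟨r, hrn⟩ : Fin n) : ℕ) = r from rfl]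
              split_ifs <;> first | (exfalso; omega) | norm_num
            · rw [emat_mul_apply_other r 0 1 _ h1 h2]
              simp only [hQ', of_apply]
              split_ifs <;> first | rfl | (exfalso; omega)
        · by_cases h1 : (i : ℕ) = r
          · rw [emat_mul_apply_eq r 0 1 _ h1, zero_mul]
            simp only [hQ', of_apply]
            split_ifs <;> first | rfl | (exfalso; omega)
          · by_cases h2 : (i : ℕ) = r + 1
            · rw [emat_mul_apply_succ r hrn 0 1 _ h2]
              simp only [hQ', of_apply, show ((⟨r, hrn⟩ : Fin n) : ℕ) = r from rfl]
              split_ifs <;> first | (exfalso; omega) | norm_num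
            · rw [emat_mul_apply_other r 0 1 _ h1 h2]
              simp only [hQ', of_apply]
              split_ifs <;> first | rfl | (exfalso; omega)
    have hinner : ∀ r, q ≤ r → r ≤ (rep qf : ℕ) → ∃ l' : List (Matrix (Fin n) (Fin n) ℝ),
        (∀ M ∈ l', ∃ t, M = Emat n t 0 1) ∧ l'.prod * rectId n n1 = Q' r := by
      intro r hqr
      induction r, hqr using Nat.le_induction with
      | base => exact fun _ => ⟨l, hl, by rw [hprod, hbase]⟩
      | succ r hqr ih2 =>
        intro hr1
        obtain ⟨l', hl', hp'⟩ := ih2 (by omega)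
        refine ⟨Emat n r 0 1 :: l', ?_, ?_⟩
        · intro M hM
          rcases List.mem_cons.mp hM with h | h
          · exact ⟨r, h⟩
          · exact hl' M h
        · rw [List.prod_cons, Matrix.mul_assoc, hp', hstep r hqr (by omega)]
    obtain ⟨l'', hl'', hp''⟩ := hinner (rep qf : ℕ) (hreple qf) le_rfl
    refine ⟨l'', hl'', ?_⟩
    rw [hp'']
    ext i p
    simp only [hQ', hQm, of_apply]
    by_cases hpq : (p : ℕ) = q
    · have : p = qf := Fin.ext hpq
      subst this
      split_ifs <;> first | rfl | (exfalso; omega)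
    · split_ifs <;> first | rfl | (exfalso; omega)

end Helpers

section Copy

variable {n : ℕ}

/-- Copy phase: a product of `E_t(1,1)` matrices turns the rep-indicator matrix into
the block-duplication matrix. -/
lemma copy_phase {n1 : ℕ} (rep : Fin n1 → Fin n) (blk : Fin n → Fin n1)
    (hblk : Monotone blk) (hsec : ∀ p, blk (rep p) = p) (hfirst : ∀ i, rep (blk i) ≤ i) :
    ∃ l₁ : List (Matrix (Fin n) (Fin n) ℝ),
      (∀ M ∈ l₁, ∃ t, M = Emat n t 1 1) ∧
      l₁.prod * (Matrix.of fun (i : Fin n) (p : Fin n1) =>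
          if (i : ℕ) = (rep p : ℕ) then (1:ℝ) else 0)
        = Matrix.of fun (i : Fin n) (p : Fin n1) => if blk i = p then (1:ℝ) else 0 := by
  set P : Matrix (Fin n) (Fin n1) ℝ :=
    Matrix.of fun (i : Fin n) (p : Fin n1) =>
      if (i : ℕ) = (rep p : ℕ) then (1:ℝ) else 0 with hP
  set G : ℕ → Matrix (Fin n) (Fin n1) ℝ := fun k =>
    Matrix.of fun (i : Fin n) (p : Fin n1) =>
      if (i : ℕ) < k then (if blk i = p then (1:ℝ) else 0)
      else (if (i : ℕ) = (rep p : ℕ) then 1 else 0) with hG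
  suffices h : ∀ k, k ≤ n → ∃ l : List (Matrix (Fin n) (Fin n) ℝ),
      (∀ M ∈ l, ∃ t, M = Emat n t 1 1) ∧ l.prod * P = G k by
    obtain ⟨l, hl, hprod⟩ := h n le_rfl
    refine ⟨l, hl, ?_⟩
    rw [hprod]
    ext i p
    simp only [hG, of_apply]
    rw [if_pos i.isLt]
  intro k
  induction k with
  | zero =>
    intro _
    refine ⟨[], by simp, ?_⟩
    rw [List.prod_nil, Matrix.one_mul]
    ext i p
    simp only [hP, hG, of_apply]
    rw [if_neg (Nat.not_lt_zero _)]
  | succ k ih =>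
    intro hk1
    obtain ⟨l, hl, hprod⟩ := ih (by omega)
    have hkn : k < n := by omega
    set kf : Fin n := ⟨k, hkn⟩ with hkf
    by_cases hrep : rep (blk kf) = kf
    · refine ⟨l, hl, ?_⟩
      rw [hprod]
      ext i p
      simp only [hG, of_apply]
      by_cases hik : (i : ℕ) = k
      · have hikf : i = kf := Fin.ext hik
        have hrep' : rep (blk i) = i := by rw [hikf]; exact hrep
        rw [if_neg (show ¬ ((i:ℕ) < k) by omega), if_pos (show (i:ℕ) < k+1 by omega)]
        by_cases hbp : blk i = p
        · have hv : (i : ℕ) = (rep p : ℕ) := by rw [← hbp, hrep']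
          simp [hv, hbp]
        · have hv : ¬ ((i : ℕ) = (rep p : ℕ)) := by
            intro h
            apply hbp
            rw [show i = rep p from Fin.ext h]
            exact hsec p
          simp [hv, hbp]
      · split_ifs <;> first | rfl | (exfalso; omega)
    · have hltk : (rep (blk kf) : ℕ) < k := by
        have h1 : (rep (blk kf) : ℕ) ≤ (kf : ℕ) := Fin.le_def.mp (hfirst kf)
        have h2 : (rep (blk kf) : ℕ) ≠ k := fun h => hrep (Fin.ext h)
        have h3 : (kf : ℕ) = k := rfl
        omega
      have hkpos : 1 ≤ k := by omega
      have hkm : k - 1 < n := by omega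
      have hblke : blk ⟨k-1, hkm⟩ = blk kf := by
        apply le_antisymm
        · exact hblk (Fin.le_def.mpr (show k - 1 ≤ k by omega))
        · have h4 := hblk (show rep (blk kf) ≤ ⟨k-1, hkm⟩ from
            Fin.le_def.mpr (show (rep (blk kf) : ℕ) ≤ k - 1 by omega))
          rwa [hsec] at h4
      refine ⟨Emat n (k-1) 1 1 :: l, ?_, ?_⟩
      · intro M hM
        rcases List.mem_cons.mp hM with h | h
        · exact ⟨k-1, h⟩
        · exact hl M h
      · rw [List.prod_cons, Matrix.mul_assoc, hprod]
        ext i p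
        have hp1 := p.isLt
        by_cases h1 : (i:ℕ) = k-1
        · rw [emat_mul_apply_eq (k-1) 1 1 _ h1, one_mul]
          simp only [hG, of_apply]
          rw [if_pos (show (i:ℕ) < k by omega), if_pos (show (i:ℕ) < k+1 by omega)]
        · by_cases h2 : (i:ℕ) = k
          · have h2' : (i:ℕ) = (k-1) + 1 := by omega
            rw [emat_mul_apply_succ (k-1) hkm 1 1 _ h2', one_mul]
            simp only [hG, of_apply, show ((⟨k-1, hkm⟩ : Fin n) : ℕ) = k-1 from rfl]
            rw [if_pos (show k-1 < k by omega), if_neg (show ¬ ((i:ℕ) < k) by omega),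
              if_pos (show (i:ℕ) < k+1 by omega)]
            have hikf : i = kf := Fin.ext h2
            have e1 : blk ⟨k-1, hkm⟩ = blk i := by rw [hikf]; exact hblke
            rw [e1]
            have hno : (if (i:ℕ) = (rep p : ℕ) then (1:ℝ) else 0) = 0 := by
              rw [if_neg]
              intro h
              have hkfrp : kf = rep p := Fin.ext (show (kf:ℕ) = (rep p : ℕ) from by
                show k = (rep p : ℕ); omega)
              apply hrep
              have hbkp : blk kf = p := by rw [hkfrp]; exact hsec p
              rw [hbkp, ← hkfrp]
            rw [hno, add_zero]
          · rw [emat_mul_apply_other (k-1) 1 1 _ h1 (show (i:ℕ) ≠ (k-1)+1 by omega)]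
            simp only [hG, of_apply]
            split_ifs <;> first | rfl | (exfalso; omega)

/-- Full duplication factorization. -/
lemma dup_factor {n1 : ℕ} (rep : Fin n1 → Fin n) (blk : Fin n → Fin n1)
    (hmono : StrictMono rep) (hblk : Monotone blk)
    (hsec : ∀ p, blk (rep p) = p) (hfirst : ∀ i, rep (blk i) ≤ i) :
    ∃ l₁ l₂ : List (Matrix (Fin n) (Fin n) ℝ),
      (∀ M ∈ l₁, ∃ t, M = Emat n t 1 1) ∧ (∀ M ∈ l₂, ∃ t, M = Emat n t 0 1) ∧
      l₁.prod * l₂.prod * rectId n n1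
        = Matrix.of fun (i : Fin n) (p : Fin n1) => if blk i = p then (1:ℝ) else 0 := by
  obtain ⟨l₂, h₂, hPf⟩ := shift_phase rep hmono
  obtain ⟨l₁, h₁, hDf⟩ := copy_phase rep blk hblk hsec hfirst
  exact ⟨l₁, l₂, h₁, h₂, by rw [Matrix.mul_assoc, hPf, hDf]⟩

end Copy

lemma rectId_transpose (n p : ℕ) : (rectId n p)ᵀ = rectId p n := by
  ext i j
  simp only [rectId, transpose_apply, of_apply]
  split_ifs <;> first | rfl | (exfalso; omega)


/-- a matrix whose rows and columns coincide on consecutive blocks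
(described by the block-representative maps `rowRep`, `colRep` and block-assignment maps
`rowBlk`, `colBlk`) can be recovered from its representative submatrix as
`A = R · A[i_1,…,i_{n_1} | j_1,…,j_{m_1}] · C`, where `R` is a product of elementary
bidiagonal matrices `E_t(1,1)`, `E_t(0,1)` and the rectangular identity `I_{n,n₁}`, and
`C` is the transpose-analogous product. -/
theorem stmt14 (n m n1 m1 : ℕ) (A : Matrix (Fin n) (Fin m) ℝ)
    (rowRep : Fin n1 → Fin n) (colRep : Fin m1 → Fin m)
    (rowBlk : Fin n → Fin n1) (colBlk : Fin m → Fin m1)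
    (hrowMono : StrictMono rowRep) (hcolMono : StrictMono colRep)
    (hrowBlkMono : Monotone rowBlk) (hcolBlkMono : Monotone colBlk)
    (hrowSec : ∀ p, rowBlk (rowRep p) = p) (hcolSec : ∀ p, colBlk (colRep p) = p)
    (hrowFirst : ∀ i, rowRep (rowBlk i) ≤ i) (hcolFirst : ∀ j, colRep (colBlk j) ≤ j)
    (hrowEq : ∀ i j, A i j = A (rowRep (rowBlk i)) j)
    (hcolEq : ∀ i j, A i j = A i (colRep (colBlk j))) :
    ∃ (R : Matrix (Fin n) (Fin n1) ℝ) (C : Matrix (Fin m1) (Fin m) ℝ)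
      (l₁ l₂ : List (Matrix (Fin n) (Fin n) ℝ)) (l₃ l₄ : List (Matrix (Fin m) (Fin m) ℝ)),
      (∀ M ∈ l₁, ∃ t, M = Emat n t 1 1) ∧ (∀ M ∈ l₂, ∃ t, M = Emat n t 0 1) ∧
      (∀ M ∈ l₃, ∃ t, M = Emat m t 0 1) ∧ (∀ M ∈ l₄, ∃ t, M = Emat m t 1 1) ∧
      R = l₁.prod * l₂.prod * rectId n n1 ∧
      C = rectId m1 m * (l₃.prod)ᵀ * (l₄.prod)ᵀ ∧
      A = R * A.submatrix rowRep colRep * C := by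
  obtain ⟨l₁, l₂, h₁, h₂, hR⟩ :=
    dup_factor rowRep rowBlk hrowMono hrowBlkMono hrowSec hrowFirst
  obtain ⟨l₄, l₃, h₄, h₃, hC⟩ :=
    dup_factor colRep colBlk hcolMono hcolBlkMono hcolSec hcolFirst
  set Dr : Matrix (Fin n) (Fin n1) ℝ :=
    Matrix.of fun (i : Fin n) (p : Fin n1) => if rowBlk i = p then (1:ℝ) else 0 with hDr
  set Dc : Matrix (Fin m) (Fin m1) ℝ :=
    Matrix.of fun (j : Fin m) (q : Fin m1) => if colBlk j = q then (1:ℝ) else 0 with hDc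
  have hCt : Dcᵀ = rectId m1 m * (l₃.prod)ᵀ * (l₄.prod)ᵀ := by
    rw [← hC, Matrix.transpose_mul, Matrix.transpose_mul, rectId_transpose,
      Matrix.mul_assoc]
  refine ⟨Dr, Dcᵀ, l₁, l₂, l₃, l₄, h₁, h₂, h₃, h₄, hR.symm, hCt, ?_⟩
  have e2 : ∀ (B : Matrix (Fin n) (Fin m1) ℝ) (i : Fin n) (j : Fin m),
      (B * Dcᵀ) i j = B i (colBlk j) := by
    intro B i j
    rw [Matrix.mul_apply]
    rw [Finset.sum_eq_single (colBlk j)]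
    · simp [hDc]
    · intro q _ hq
      have : ¬ (colBlk j = q) := fun h => hq h.symm
      simp [hDc, this]
    · simp
  have e1 : ∀ (B : Matrix (Fin n1) (Fin m1) ℝ) (i : Fin n) (j : Fin m1),
      (Dr * B) i j = B (rowBlk i) j := by
    intro B i j
    rw [Matrix.mul_apply]
    rw [Finset.sum_eq_single (rowBlk i)]
    · simp [hDr]
    · intro q _ hq
      have : ¬ (rowBlk i = q) := fun h => hq h.symm
      simp [hDr, this]
    · simp
  ext i j
  rw [e2, e1, Matrix.submatrix_apply, ← hcolEq, ← hrowEq]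
end
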